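/- arXiv:1503.05742 — 11 statements merged into one kernel-verified Lean document; each statement's English description precedes it below -/
import Mathlib

section
/- Let μ be a finite nonnegative Borel measure on [0,∞) and ν > 0. Define |||μ|||_ν^2 := sup_{t>0} t^{-2ν} μ([0,t)). Then for every Λ > 0 and every γ > ν, μ([0,Λ)) + Λ^{2γ} ∫_{[Λ,∞)} λ^{-2γ} dμ(λ) ≤ (γ/(γ-ν)) · Λ^{2ν} · |||μ|||_ν^2, whenever |||μ|||_ν is finite. -/
open MeasureTheory Set ENNReal

/-!
Write `x ^ (-p) = ∫_{t > x} p t ^ (-p-1) dt`. By Tonelli (an Abel summation against `μ`),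
`Λ ^ (-p) μ([0,Λ)) + ∫_{[Λ,∞)} x ^ (-p) dμ = ∫_{t > Λ} p t ^ (-p-1) μ([0,t)) dt`, and bounding
`μ([0,t)) ≤ t ^ q C` leaves `p C ∫_{t > Λ} t ^ (q-p-1) dt = p C Λ ^ (q-p) / (p-q)`, which is finite
exactly because `q < p`. Multiplying by `Λ ^ p` gives the claim with `p = 2γ`, `q = 2ν`, `C = M²`.
-/

theorem lintegral_Ioi_ofReal_mul_rpow {c a x : ℝ} (hc : 0 ≤ c) (ha : a < -1) (hx : 0 < x) :
    ∫⁻ t in Ioi x, ENNReal.ofReal (c * t ^ a)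
      = ENNReal.ofReal (c * (-x ^ (a + 1) / (a + 1))) := by
  rw [← ofReal_integral_eq_lintegral_ofReal ((integrableOn_Ioi_rpow_of_lt ha hx).const_mul c),
    integral_const_mul, integral_Ioi_rpow_of_lt ha hx]
  filter_upwards [ae_restrict_mem measurableSet_Ioi] with t ht
  exact mul_nonneg hc (Real.rpow_nonneg (hx.trans ht).le a)

theorem lintegral_Ioi_ofReal_mul_rpow_neg_sub_one {p x : ℝ} (hp : 0 < p) (hx : 0 < x) :
    ∫⁻ t in Ioi x, ENNReal.ofReal (p * t ^ (-p - 1)) = ENNReal.ofReal (x ^ (-p)) := by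
  rw [lintegral_Ioi_ofReal_mul_rpow hp.le (by linarith) hx, sub_add_cancel]
  congr 1
  field_simp

section Tonelli

variable {μ : Measure ℝ} [SFinite μ] {g : ℝ → ℝ≥0∞}

theorem setLIntegral_Ici_lintegral_Ioi (hg : Measurable g) (Λ : ℝ) :
    ∫⁻ x in Ici Λ, (∫⁻ t in Ioi x, g t) ∂μ = ∫⁻ t in Ioi Λ, g t * μ (Ico Λ t) := by
  have hmeas : Measurable (Function.uncurry fun x t : ℝ => if x < t then g t else 0) :=
    Measurable.ite (measurableSet_lt measurable_fst measurable_snd)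
      (hg.comp measurable_snd) measurable_const
  calc ∫⁻ x in Ici Λ, (∫⁻ t in Ioi x, g t) ∂μ
      = ∫⁻ x in Ici Λ, (∫⁻ t in Ioi Λ, if x < t then g t else 0) ∂μ := by
        refine setLIntegral_congr_fun measurableSet_Ici fun x hx => ?_
        have hind : (fun t => if x < t then g t else 0) = (Ioi x).indicator g := by
          ext t; simp [indicator]
        rw [hind, lintegral_indicator measurableSet_Ioi, Measure.restrict_restrict measurableSet_Ioi,
          Ioi_inter_Ioi, max_eq_left hx]
    _ = ∫⁻ t in Ioi Λ, (∫⁻ x in Ici Λ, if x < t then g t else 0 ∂μ) :=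
        lintegral_lintegral_swap hmeas.aemeasurable
    _ = ∫⁻ t in Ioi Λ, g t * μ (Ico Λ t) := by
        refine setLIntegral_congr_fun measurableSet_Ioi fun t _ => ?_
        have hind : (fun x => if x < t then g t else 0) = (Iio t).indicator fun _ => g t := by
          ext x; simp [indicator]
        rw [hind, lintegral_indicator measurableSet_Iio, setLIntegral_const,
          Measure.restrict_apply measurableSet_Iio, inter_comm, Ici_inter_Iio]

theorem setLIntegral_Ioi_mul_measure_Ico (hg : Measurable g) {a Λ : ℝ} (haΛ : a ≤ Λ) :
    ∫⁻ t in Ioi Λ, g t * μ (Ico a t)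
      = (∫⁻ t in Ioi Λ, g t) * μ (Ico a Λ) + ∫⁻ x in Ici Λ, (∫⁻ t in Ioi x, g t) ∂μ := by
  have hsplit : ∀ t ∈ Ioi Λ, g t * μ (Ico a t) = g t * μ (Ico a Λ) + g t * μ (Ico Λ t) := by
    intro t ht
    rw [← mul_add, ← measure_union Ico_disjoint_Ico_same measurableSet_Ico,
      Ico_union_Ico_eq_Ico haΛ (le_of_lt ht)]
  rw [setLIntegral_congr_fun measurableSet_Ioi hsplit, lintegral_add_left (hg.mul_const _),
    lintegral_mul_const _ hg, setLIntegral_Ici_lintegral_Ioi hg]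

end Tonelli

theorem measure_Ico_add_mul_lintegral_rpow_le {μ : Measure ℝ} [SFinite μ] {p q C Λ : ℝ}
    (hp : 0 < p) (hqp : q < p) (hC : 0 ≤ C) (hΛ : 0 < Λ)
    (hμ : ∀ t > Λ, μ (Ico 0 t) ≤ ENNReal.ofReal (t ^ q * C)) :
    μ (Ico 0 Λ) + ENNReal.ofReal (Λ ^ p) * ∫⁻ x in Ici Λ, ENNReal.ofReal (x ^ (-p)) ∂μ
      ≤ ENNReal.ofReal (p / (p - q) * (Λ ^ q * C)) := by
  set g : ℝ → ℝ≥0∞ := fun t => ENNReal.ofReal (p * t ^ (-p - 1))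
  have hg : Measurable g := by fun_prop
  have hpointwise : ∀ t ∈ Ioi Λ, g t * μ (Ico 0 t) ≤ ENNReal.ofReal (p * C * t ^ (q - p - 1)) := by
    intro t ht
    have ht0 : 0 < t := hΛ.trans ht
    calc g t * μ (Ico 0 t) ≤ g t * ENNReal.ofReal (t ^ q * C) := mul_le_mul_right (hμ t ht) _
      _ = ENNReal.ofReal (p * C * t ^ (q - p - 1)) := by
        rw [← ENNReal.ofReal_mul (by positivity), show q - p - 1 = (-p - 1) + q by ring,
          Real.rpow_add ht0]
        ring_nf
  have hΛp : ENNReal.ofReal (Λ ^ p) * ENNReal.ofReal (Λ ^ (-p)) = 1 := by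
    rw [← ENNReal.ofReal_mul (by positivity), ← Real.rpow_add hΛ, add_neg_cancel, Real.rpow_zero,
      ENNReal.ofReal_one]
  calc μ (Ico 0 Λ) + ENNReal.ofReal (Λ ^ p) * ∫⁻ x in Ici Λ, ENNReal.ofReal (x ^ (-p)) ∂μ
      = ENNReal.ofReal (Λ ^ p) * ∫⁻ t in Ioi Λ, g t * μ (Ico 0 t) := by
        rw [setLIntegral_Ioi_mul_measure_Ico hg hΛ.le, lintegral_Ioi_ofReal_mul_rpow_neg_sub_one hp hΛ,
          setLIntegral_congr_fun measurableSet_Ici fun x hx =>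
            lintegral_Ioi_ofReal_mul_rpow_neg_sub_one hp (hΛ.trans_le hx),
          mul_add, ← mul_assoc, hΛp, one_mul]
    _ ≤ ENNReal.ofReal (Λ ^ p) * ∫⁻ t in Ioi Λ, ENNReal.ofReal (p * C * t ^ (q - p - 1)) :=
        mul_le_mul_right (setLIntegral_mono (by fun_prop) hpointwise) _
    _ = ENNReal.ofReal (p / (p - q) * (Λ ^ q * C)) := by
        rw [lintegral_Ioi_ofReal_mul_rpow (by positivity) (by linarith) hΛ,
          ← ENNReal.ofReal_mul (by positivity), sub_add_cancel, Real.rpow_sub hΛ]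
        congr 1
        have : p - q ≠ 0 := by linarith
        have : q - p ≠ 0 := by linarith
        field_simp
        ring

theorem measure_Ico_toReal_add_rpow_mul_setIntegral_le {μ : Measure ℝ} [IsFiniteMeasure μ]
    {p q C Λ : ℝ} (hp : 0 < p) (hqp : q < p) (hC : 0 ≤ C) (hΛ : 0 < Λ)
    (hμ : ∀ t > Λ, (μ (Ico 0 t)).toReal ≤ t ^ q * C) :
    (μ (Ico 0 Λ)).toReal + Λ ^ p * ∫ x in Ici Λ, x ^ (-p) ∂μ ≤ p / (p - q) * (Λ ^ q * C) := by
  have hbound := measure_Ico_add_mul_lintegral_rpow_le hp hqp hC hΛ fun t ht =>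
    (ENNReal.le_ofReal_iff_toReal_le (measure_ne_top μ _)
      (mul_nonneg (Real.rpow_nonneg (hΛ.trans ht).le q) hC)).2 (hμ t ht)
  have hsum_ne_top := ne_top_of_le_ne_top ofReal_ne_top hbound
  have hintegral : ∫ x in Ici Λ, x ^ (-p) ∂μ
      = (∫⁻ x in Ici Λ, ENNReal.ofReal (x ^ (-p)) ∂μ).toReal := by
    refine integral_eq_lintegral_of_nonneg_ae ?_ (by fun_prop)
    filter_upwards [ae_restrict_mem measurableSet_Ici] with x hx
    exact Real.rpow_nonneg (hΛ.le.trans hx) _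
  rw [hintegral, ← ENNReal.toReal_ofReal (Real.rpow_nonneg hΛ.le p), ← toReal_mul,
    ← toReal_add (measure_ne_top μ _) (add_ne_top.1 hsum_ne_top).2]
  exact toReal_le_of_le_ofReal (by have := sub_pos.2 hqp; positivity) hbound

theorem stmt4_general (μ : Measure ℝ) [IsFiniteMeasure μ]
    (ν : ℝ) (hν : 0 < ν) (M : ℝ)
    (hM : ∀ t > 0, (μ (Ico 0 t)).toReal ≤ t ^ (2*ν) * M ^ 2)
    (Λ γ : ℝ) (hΛ : 0 < Λ) (hγ : ν < γ) :
    (μ (Ico 0 Λ)).toReal + Λ ^ (2*γ) * ∫ l in Ici Λ, l ^ (-(2*γ)) ∂μ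
      ≤ γ / (γ - ν) * (Λ ^ (2*ν) * M ^ 2) := by
  have hbound := measure_Ico_toReal_add_rpow_mul_setIntegral_le (μ := μ) (by linarith)
    (by linarith : 2 * ν < 2 * γ) (sq_nonneg M) hΛ fun t ht => hM t (hΛ.trans ht)
  rwa [← mul_sub, mul_div_mul_left γ (γ - ν) two_ne_zero] at hbound

/-- Lemma for measures, part 1.  `μ` a finite Borel measure on `[0,∞)`, `ν > 0`,
`M² ≥ |||μ|||_ν² = sup_{t>0} t^(-2ν) μ([0,t))` (finite).  Then for `Λ > 0`, `γ > ν`: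
`μ([0,Λ)) + Λ^(2γ) ∫_{[Λ,∞)} λ^(-2γ) dμ ≤ (γ/(γ-ν)) Λ^(2ν) M²`. -/
theorem stmt4 (μ : Measure ℝ) [IsFiniteMeasure μ] (hsupp : μ (Iio 0) = 0)
    (ν : ℝ) (hν : 0 < ν) (M : ℝ)
    (hM : ∀ t > 0, (μ (Ico 0 t)).toReal ≤ t ^ (2*ν) * M ^ 2)
    (Λ γ : ℝ) (hΛ : 0 < Λ) (hγ : ν < γ) :
    (μ (Ico 0 Λ)).toReal + Λ ^ (2*γ) * ∫ l in Ici Λ, l ^ (-(2*γ)) ∂μ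
      ≤ γ / (γ - ν) * (Λ ^ (2*ν) * M ^ 2) :=
  stmt4_general μ ν hν M hM Λ γ hΛ hγ
end

section
/- Let μ be a finite nonnegative Borel measure on [0,∞), ν > 0, and r ≥ 0. Then for every Λ > 0, ∫_{[0,Λ)} λ^{-2r} dμ(λ) ≤ ((r+ν)/ν) · Λ^{2ν} · |||μ|||_{r+ν}^2, whenever |||μ|||_{r+ν}^2 := sup_{t>0} t^{-2(r+ν)} μ([0,t)) is finite. -/
open MeasureTheory Set

/-- Lemma for measures, part 2.  `μ` a finite Borel measure on `[0,∞)`, `ν > 0`, `r ≥ 0`,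
`M² ≥ |||μ|||_{r+ν}² = sup_{t>0} t^(-2(r+ν)) μ([0,t))` (finite).  Then for `Λ > 0`:
`∫_{[0,Λ)} λ^(-2r) dμ ≤ ((r+ν)/ν) Λ^(2ν) M²`. -/
theorem stmt5 (μ : Measure ℝ) [IsFiniteMeasure μ] (hsupp : μ (Iio 0) = 0)
    (ν r : ℝ) (hν : 0 < ν) (hr : 0 ≤ r) (M : ℝ)
    (hM : ∀ t > 0, (μ (Ico 0 t)).toReal ≤ t ^ (2*(r+ν)) * M ^ 2)
    (Λ : ℝ) (hΛ : 0 < Λ) :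
    ∫ l in Ico 0 Λ, l ^ (-(2*r)) ∂μ ≤ (r + ν) / ν * (Λ ^ (2*ν) * M ^ 2) := by
  have hM2 : (0:ℝ) ≤ M ^ 2 := sq_nonneg M
  rcases eq_or_lt_of_le hr with h0 | hrpos
  · -- case r = 0
    subst h0
    have h1 : ∀ l ∈ Ico (0:ℝ) Λ, l ^ (-(2*(0:ℝ))) = 1 := by
      intro l hl; norm_num
    rw [setIntegral_congr_fun measurableSet_Ico h1, setIntegral_const, smul_eq_mul, mul_one]
    calc (μ (Ico 0 Λ)).toReal ≤ Λ ^ (2*((0:ℝ)+ν)) * M ^ 2 := hM Λ hΛ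
      _ ≤ ((0:ℝ) + ν) / ν * (Λ ^ (2*ν) * M ^ 2) := by
          rw [zero_add, div_self hν.ne', one_mul]
  · -- case 0 < r
    set q : ℝ := -(2*r) with hqdef
    have hqneg : q < 0 := by rw [hqdef]; nlinarith
    have hq0 : q ≠ 0 := hqneg.ne
    set s2 : ℝ := 2*(r+ν) with hs2def
    have hs2pos : 0 < s2 := by rw [hs2def]; nlinarith
    have fmeas : Measurable fun x : ℝ => x ^ q := by fun_prop
    have hnn : 0 ≤ᵐ[μ.restrict (Ico 0 Λ)] fun l : ℝ => l ^ q := by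
      filter_upwards [self_mem_ae_restrict measurableSet_Ico] with l hl
      exact Real.rpow_nonneg hl.1 _
    rw [integral_eq_lintegral_of_nonneg_ae hnn fmeas.aestronglyMeasurable]
    have hRHSnn : (0:ℝ) ≤ (r + ν) / ν * (Λ ^ (2*ν) * M ^ 2) := by positivity
    apply ENNReal.toReal_le_of_le_ofReal hRHSnn
    rw [lintegral_eq_lintegral_meas_lt _ hnn fmeas.aemeasurable]
    set c : ℝ := Λ ^ q with hcdef
    have hc : 0 < c := Real.rpow_pos_of_pos hΛ _
    set e : ℝ := q⁻¹ * s2 with hedef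
    have hqe : q * e = s2 := by
      rw [hedef, ← mul_assoc, mul_inv_cancel₀ hq0, one_mul]
    have he : e < -1 := by
      have h : e = -((r+ν)/r) := by
        rw [hedef, hqdef, hs2def]; field_simp
      rw [h]
      have : (1:ℝ) < (r+ν)/r := (one_lt_div hrpos).mpr (by linarith)
      linarith
    -- pointwise bound on the superlevel-set measure
    have key : ∀ t ∈ Ioi (0:ℝ),
        (μ.restrict (Ico 0 Λ)) {a : ℝ | t < a ^ q} ≤
          ENNReal.ofReal ((min Λ (t ^ q⁻¹)) ^ s2 * M ^ 2) := by
      intro t ht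
      have htpos : (0:ℝ) < t := ht
      have hmin : 0 < min Λ (t ^ q⁻¹) := lt_min hΛ (Real.rpow_pos_of_pos htpos _)
      have hms : MeasurableSet {a : ℝ | t < a ^ q} := measurableSet_lt measurable_const fmeas
      rw [Measure.restrict_apply hms]
      calc μ ({a : ℝ | t < a ^ q} ∩ Ico 0 Λ)
          ≤ μ (Ico 0 (min Λ (t ^ q⁻¹))) := by
            apply measure_mono
            rintro a ⟨hta, ha0, haΛ⟩
            have hta' : t < a ^ q := hta
            have ha0' : 0 < a := by
              rcases ha0.lt_or_eq with h | h
              · exact h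
              · exfalso; rw [← h, Real.zero_rpow hq0] at hta'; linarith
            refine ⟨ha0, lt_min haΛ ?_⟩
            have h2 := Real.rpow_lt_rpow_of_neg htpos hta' (inv_lt_zero.mpr hqneg)
            rwa [Real.rpow_rpow_inv ha0'.le hq0] at h2
        _ ≤ ENNReal.ofReal ((min Λ (t ^ q⁻¹)) ^ s2 * M ^ 2) := by
            rw [← ENNReal.ofReal_toReal (measure_ne_top μ _)]
            exact ENNReal.ofReal_le_ofReal (hM _ hmin)
    have part1 : ∫⁻ t in Ioc (0:ℝ) c, ENNReal.ofReal ((min Λ (t ^ q⁻¹)) ^ s2 * M ^ 2) ≤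
        ENNReal.ofReal (Λ ^ s2 * M ^ 2 * c) := by
      calc ∫⁻ t in Ioc (0:ℝ) c, ENNReal.ofReal ((min Λ (t ^ q⁻¹)) ^ s2 * M ^ 2)
          ≤ ∫⁻ _ in Ioc (0:ℝ) c, ENNReal.ofReal (Λ ^ s2 * M ^ 2) := by
            apply setLIntegral_mono' measurableSet_Ioc
            intro t ht
            apply ENNReal.ofReal_le_ofReal
            apply mul_le_mul_of_nonneg_right _ hM2
            exact Real.rpow_le_rpow (le_min hΛ.le (Real.rpow_nonneg ht.1.le _))
              (min_le_left _ _) hs2pos.le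
        _ = ENNReal.ofReal (Λ ^ s2 * M ^ 2) * volume (Ioc (0:ℝ) c) := setLIntegral_const _ _
        _ = ENNReal.ofReal (Λ ^ s2 * M ^ 2 * c) := by
            rw [Real.volume_Ioc, sub_zero, ← ENNReal.ofReal_mul (by positivity)]
    have hInt : IntegrableOn (fun t : ℝ => t ^ e * M ^ 2) (Ioi c) :=
      (integrableOn_Ioi_rpow_of_lt he hc).mul_const _
    have hnn2 : 0 ≤ᵐ[volume.restrict (Ioi c)] fun t : ℝ => t ^ e * M ^ 2 := by
      filter_upwards [self_mem_ae_restrict measurableSet_Ioi] with t ht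
      exact mul_nonneg (Real.rpow_nonneg (hc.trans ht).le _) hM2
    have part2 : ∫⁻ t in Ioi c, ENNReal.ofReal ((min Λ (t ^ q⁻¹)) ^ s2 * M ^ 2) ≤
        ENNReal.ofReal (Λ ^ (2*ν) * (r/ν) * M ^ 2) := by
      calc ∫⁻ t in Ioi c, ENNReal.ofReal ((min Λ (t ^ q⁻¹)) ^ s2 * M ^ 2)
          ≤ ∫⁻ t in Ioi c, ENNReal.ofReal (t ^ e * M ^ 2) := by
            apply setLIntegral_mono' measurableSet_Ioi
            intro t ht
            have ht0 : 0 < t := hc.trans ht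
            apply ENNReal.ofReal_le_ofReal
            apply mul_le_mul_of_nonneg_right _ hM2
            calc (min Λ (t ^ q⁻¹)) ^ s2 ≤ (t ^ q⁻¹) ^ s2 :=
                  Real.rpow_le_rpow (le_min hΛ.le (Real.rpow_nonneg ht0.le _))
                    (min_le_right _ _) hs2pos.le
              _ = t ^ e := by rw [hedef]; exact (Real.rpow_mul ht0.le _ _).symm
        _ = ENNReal.ofReal (∫ t in Ioi c, t ^ e * M ^ 2) :=
            (ofReal_integral_eq_lintegral_ofReal hInt hnn2).symm
        _ = ENNReal.ofReal (Λ ^ (2*ν) * (r/ν) * M ^ 2) := by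
            rw [integral_mul_const, integral_Ioi_rpow_of_lt he hc]
            congr 1
            have h1 : c ^ (e+1) = Λ ^ (2*ν) := by
              rw [hcdef, ← Real.rpow_mul hΛ.le]
              congr 1
              have h : q * (e+1) = s2 + q := by rw [mul_add, hqe, mul_one]
              rw [h, hs2def, hqdef]; ring
            have h2 : e + 1 = -(ν/r) := by
              rw [hedef, hqdef, hs2def]; field_simp; ring
            rw [h1, h2]
            field_simp
    calc ∫⁻ t in Ioi (0:ℝ), (μ.restrict (Ico 0 Λ)) {a : ℝ | t < a ^ q}
        ≤ ∫⁻ t in Ioi (0:ℝ), ENNReal.ofReal ((min Λ (t ^ q⁻¹)) ^ s2 * M ^ 2) :=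
          setLIntegral_mono' measurableSet_Ioi key
      _ = (∫⁻ t in Ioc (0:ℝ) c, ENNReal.ofReal ((min Λ (t ^ q⁻¹)) ^ s2 * M ^ 2))
            + ∫⁻ t in Ioi c, ENNReal.ofReal ((min Λ (t ^ q⁻¹)) ^ s2 * M ^ 2) := by
          rw [← Ioc_union_Ioi_eq_Ioi hc.le,
            lintegral_union measurableSet_Ioi (Ioc_disjoint_Ioi le_rfl)]
      _ ≤ ENNReal.ofReal (Λ ^ s2 * M ^ 2 * c)
            + ENNReal.ofReal (Λ ^ (2*ν) * (r/ν) * M ^ 2) := add_le_add part1 part2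
      _ ≤ ENNReal.ofReal ((r + ν) / ν * (Λ ^ (2*ν) * M ^ 2)) := by
          rw [← ENNReal.ofReal_add (by positivity)
            (mul_nonneg (mul_nonneg (Real.rpow_nonneg hΛ.le _) (div_nonneg hr hν.le)) hM2)]
          apply ENNReal.ofReal_le_ofReal
          have h3 : Λ ^ s2 * c = Λ ^ (2*ν) := by
            rw [hcdef, ← Real.rpow_add hΛ]
            congr 1
            rw [hs2def, hqdef]; ring
          have h4 : Λ ^ s2 * M ^ 2 * c = Λ ^ (2*ν) * M ^ 2 := by
            rw [← h3]; ring
          rw [h4]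
          apply le_of_eq
          field_simp
          ring
end

section
/- Let X, Y be Banach spaces, X₁ ⊂ X a continuously embedded Banach subspace, and S : X → Y a bounded linear operator with ‖Sx‖_Y ≤ C₀‖x‖₀ for all x ∈ X and ‖Sx₁‖_Y ≤ C₁‖x₁‖₁ for all x₁ ∈ X₁. Then for 0 < θ < 1 and every x with ‖x‖_{θ:1} := sup_{t>0} t^{-θ} K_t(x) < ∞, one has ‖Sx‖_Y ≤ N_θ · C₀^{1-θ} C₁^θ · ‖x‖_{θ:1}. -/
open Set

/-- Operator interpolation inequality: if `‖Sz‖ ≤ C₀‖z‖` on `X` and `‖S(jz)‖ ≤ C₁‖z‖₁`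
on the embedded subspace `X₁`, then for `0 < θ < 1` and any `x` with
`‖x‖_{θ:1} = sup_{t>0} t^(-θ) K_t(x) ≤ B < ∞`:
`‖Sx‖ ≤ N_θ C₀^(1-θ) C₁^θ B`, where `N_θ = (θ^θ(1-θ)^(1-θ))^(-1/2)`. -/
theorem stmt8 {X X₁ Y : Type*} [NormedAddCommGroup X] [NormedSpace ℝ X] [CompleteSpace X]
    [NormedAddCommGroup X₁] [NormedSpace ℝ X₁] [CompleteSpace X₁]
    [NormedAddCommGroup Y] [NormedSpace ℝ Y] [CompleteSpace Y]
    (j : X₁ →L[ℝ] X) (hj : Function.Injective j)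
    (S : X →L[ℝ] Y) (C₀ C₁ : ℝ) (hC₀ : 0 ≤ C₀) (hC₁ : 0 ≤ C₁)
    (hS0 : ∀ z : X, ‖S z‖ ≤ C₀ * ‖z‖)
    (hS1 : ∀ z : X₁, ‖S (j z)‖ ≤ C₁ * ‖z‖)
    (θ : ℝ) (h0 : 0 < θ) (h1 : θ < 1) (x : X) (B : ℝ)
    (hB : ∀ t : ℝ, 0 < t →
      t ^ (-θ) * sInf {v : ℝ | ∃ x₁ : X₁,
        v = Real.sqrt (‖x - j x₁‖ ^ 2 + t ^ 2 * ‖x₁‖ ^ 2)} ≤ B) :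
    ‖S x‖ ≤ (θ ^ θ * (1 - θ) ^ (1 - θ)) ^ (-(1:ℝ)/2) * (C₀ ^ (1 - θ) * C₁ ^ θ) * B := by
  have h1θ : 0 < 1 - θ := by linarith
  have hKne : ∀ t : ℝ, Set.Nonempty {v : ℝ | ∃ x₁ : X₁,
      v = Real.sqrt (‖x - j x₁‖ ^ 2 + t ^ 2 * ‖x₁‖ ^ 2)} := fun t => ⟨_, 0, rfl⟩
  have hKnonneg : ∀ t : ℝ, 0 ≤ sInf {v : ℝ | ∃ x₁ : X₁,
      v = Real.sqrt (‖x - j x₁‖ ^ 2 + t ^ 2 * ‖x₁‖ ^ 2)} := fun t =>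
    Real.sInf_nonneg (by rintro v ⟨x₁, rfl⟩; exact Real.sqrt_nonneg _)
  have hBnn : 0 ≤ B := by
    have h := hB 1 one_pos
    rw [Real.one_rpow] at h
    rw [one_mul] at h
    exact le_trans (hKnonneg 1) h
  rcases eq_or_lt_of_le hC₀ with hC₀0 | hC₀pos
  · -- C₀ = 0
    have hx : ‖S x‖ ≤ 0 := by simpa [← hC₀0] using hS0 x
    have h00 : (0:ℝ) ^ (1-θ) = 0 := Real.zero_rpow (by linarith)
    calc ‖S x‖ ≤ 0 := hx
      _ ≤ _ := by rw [← hC₀0, h00]; simp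
  -- key inequality
  have key : ∀ t : ℝ, 0 < t →
      ‖S x‖ ≤ Real.sqrt (C₀^2 + C₁^2/t^2) * (t ^ θ * B) := by
    intro t ht
    have hMpos : 0 < Real.sqrt (C₀^2 + C₁^2/t^2) := Real.sqrt_pos.mpr (by positivity)
    have h1' : ‖S x‖ / Real.sqrt (C₀^2 + C₁^2/t^2) ≤ sInf {v : ℝ | ∃ x₁ : X₁,
        v = Real.sqrt (‖x - j x₁‖ ^ 2 + t ^ 2 * ‖x₁‖ ^ 2)} := by
      apply le_csInf (hKne t)
      rintro v ⟨x₁, rfl⟩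
      rw [div_le_iff₀ hMpos]
      set a := ‖x - j x₁‖ with ha
      set b := ‖x₁‖ with hb
      have ha0 : 0 ≤ a := norm_nonneg _
      have hb0 : 0 ≤ b := norm_nonneg _
      have hbound : ‖S x‖ ≤ C₀ * a + C₁ * b := by
        calc ‖S x‖ = ‖S (x - j x₁) + S (j x₁)‖ := by
              rw [← map_add, sub_add_cancel]
          _ ≤ ‖S (x - j x₁)‖ + ‖S (j x₁)‖ := norm_add_le _ _
          _ ≤ C₀ * a + C₁ * b := add_le_add (hS0 _) (hS1 _)
      have hcs : C₀ * a + C₁ * b ≤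
          Real.sqrt (a^2 + t^2*b^2) * Real.sqrt (C₀^2 + C₁^2/t^2) := by
        rw [← Real.sqrt_mul (by positivity)]
        have hsq : (C₀ * a + C₁ * b)^2 ≤ (a^2 + t^2*b^2) * (C₀^2 + C₁^2/t^2) := by
          have hrw : (a^2 + t^2*b^2) * (C₀^2 + C₁^2/t^2)
              = ((a^2 + t^2*b^2) * (C₀^2*t^2 + C₁^2))/t^2 := by
            field_simp
          rw [hrw, le_div_iff₀ (by positivity)]
          nlinarith [sq_nonneg (C₁*a - C₀*t^2*b), sq_nonneg t, sq_nonneg (t*(C₀*a - C₁*b))]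
        calc C₀ * a + C₁ * b = Real.sqrt ((C₀ * a + C₁ * b)^2) :=
              (Real.sqrt_sq (by positivity)).symm
          _ ≤ _ := Real.sqrt_le_sqrt hsq
      exact hbound.trans hcs
    have h2' : sInf {v : ℝ | ∃ x₁ : X₁,
        v = Real.sqrt (‖x - j x₁‖ ^ 2 + t ^ 2 * ‖x₁‖ ^ 2)} ≤ t ^ θ * B := by
      have h := hB t ht
      have htp : (0:ℝ) < t ^ θ := Real.rpow_pos_of_pos ht θ
      rw [Real.rpow_neg ht.le, inv_mul_le_iff₀ htp] at h
      exact h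
    calc ‖S x‖ = Real.sqrt (C₀^2 + C₁^2/t^2) * (‖S x‖ / Real.sqrt (C₀^2 + C₁^2/t^2)) := by
          field_simp
      _ ≤ Real.sqrt (C₀^2 + C₁^2/t^2) * (t ^ θ * B) := by
          exact mul_le_mul_of_nonneg_left (h1'.trans h2') hMpos.le
  rcases eq_or_lt_of_le hC₁ with hC₁0 | hC₁pos
  · -- C₁ = 0
    have hx : ‖S x‖ ≤ 0 := by
      have htend : Filter.Tendsto (fun t : ℝ => C₀ * (t ^ θ * B))
          (nhdsWithin 0 (Set.Ioi 0)) (nhds 0) := by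
        have h : Filter.Tendsto (fun t : ℝ => t ^ θ) (nhdsWithin 0 (Set.Ioi 0)) (nhds ((0:ℝ) ^ θ)) :=
          ((Real.continuousAt_rpow_const 0 θ (Or.inr h0.le)).tendsto).mono_left
            nhdsWithin_le_nhds
        rw [Real.zero_rpow h0.ne'] at h
        have := (h.mul_const B).const_mul C₀
        simpa using this
      refine ge_of_tendsto htend ?_
      refine Filter.eventually_of_mem self_mem_nhdsWithin fun t ht => ?_
      have ht' : (0:ℝ) < t := ht
      have := key t ht'
      rw [← hC₁0] at this
      simpa [Real.sqrt_sq hC₀pos.le, ht'.ne'] using this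
    have h00 : (0:ℝ) ^ θ = 0 := Real.zero_rpow h0.ne'
    calc ‖S x‖ ≤ 0 := hx
      _ ≤ _ := by rw [← hC₁0, h00]; simp
  · -- main case
    set t₀ : ℝ := Real.sqrt ((1-θ)/θ) * (C₁/C₀) with ht₀def
    have ht₀pos : 0 < t₀ := by positivity
    have ht₀sq : t₀^2 = (1-θ)/θ * (C₁/C₀)^2 := by
      rw [ht₀def, mul_pow, Real.sq_sqrt (by positivity)]
    have hA : C₀^2 + C₁^2/t₀^2 = C₀^2/(1-θ) := by
      rw [ht₀sq]
      field_simp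
      ring
    have hco : Real.sqrt (C₀^2 + C₁^2/t₀^2) * t₀ ^ θ =
        (θ ^ θ * (1 - θ) ^ (1 - θ)) ^ (-(1:ℝ)/2) * (C₀ ^ (1 - θ) * C₁ ^ θ) := by
      rw [hA]
      have hl : 0 < Real.sqrt (C₀^2/(1-θ)) * t₀ ^ θ := by positivity
      have hr : 0 < (θ ^ θ * (1 - θ) ^ (1 - θ)) ^ (-(1:ℝ)/2) * (C₀ ^ (1 - θ) * C₁ ^ θ) := by
        positivity
      refine Real.log_injOn_pos (Set.mem_Ioi.mpr hl) (Set.mem_Ioi.mpr hr) ?_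
      have e1 : Real.log (Real.sqrt (C₀^2/(1-θ)) * t₀ ^ θ)
          = (2*Real.log C₀ - Real.log (1-θ))/2
            + θ * ((Real.log (1-θ) - Real.log θ)/2 + (Real.log C₁ - Real.log C₀)) := by
        rw [Real.log_mul (by positivity) (by positivity),
            Real.log_sqrt (by positivity),
            Real.log_rpow ht₀pos,
            Real.log_div (by positivity) (by positivity),
            Real.log_pow, ht₀def,
            Real.log_mul (by positivity) (by positivity),
            Real.log_sqrt (by positivity),
            Real.log_div (by positivity) (by positivity),
            Real.log_div (by positivity) (by positivity)]
        push_cast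
        ring
      have e2 : Real.log ((θ ^ θ * (1 - θ) ^ (1 - θ)) ^ (-(1:ℝ)/2) * (C₀ ^ (1 - θ) * C₁ ^ θ))
          = (-(1:ℝ)/2) * (θ*Real.log θ + (1-θ)*Real.log (1-θ))
            + ((1-θ)*Real.log C₀ + θ*Real.log C₁) := by
        rw [Real.log_mul (by positivity) (by positivity),
            Real.log_rpow (by positivity : (0:ℝ) < θ ^ θ * (1 - θ) ^ (1 - θ)),
            Real.log_mul (by positivity) (by positivity),
            Real.log_rpow h0, Real.log_rpow h1θ,
            Real.log_mul (by positivity) (by positivity),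
            Real.log_rpow hC₀pos, Real.log_rpow hC₁pos]
      rw [e1, e2]
      ring
    calc ‖S x‖ ≤ Real.sqrt (C₀^2 + C₁^2/t₀^2) * (t₀ ^ θ * B) := key t₀ ht₀pos
      _ = (Real.sqrt (C₀^2 + C₁^2/t₀^2) * t₀ ^ θ) * B := by ring
      _ = _ := by rw [hco]
end

section
/- Let T : X → Y be a bounded injective linear operator between Hilbert spaces with spectral measure E of T*T, and for x ∈ X let μ_x(A) = ‖E_A x‖². For 0 ≤ ν < γ define ‖x‖_{ν:γ}² = sup_{t>0} t^{-2ν/γ} ∫_{[0,∞)} t²/(t² + λ^{2γ}) dμ_x(λ) and |||x|||_ν = sup_{t>0} t^{-ν} ‖E_{[0,t)} x‖. Then √(1 - ν/γ) · ‖x‖_{ν:γ} ≤ |||x|||_ν ≤ N_{ν/γ} · ‖x‖_{ν:γ}. -/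
/-!
Write `θ = ν/γ` and `k_t(λ) = t²/(t² + λ^{2γ})`. For the first inequality, the layer-cake
formula gives `∫ k_t dμ = ∫₀¹ μ{k_t > u} du`, and `{k_t > u} ⊆ [0, (t²/u)^{1/2γ})` has mass at
most `(t²/u)^θ |||x|||²`; integrating `u^{-θ}` over `(0,1)` produces the factor `1/(1-θ)`.
For the second, `k_s ≥ s²/(s² + t^{2γ})` on `[0,t)`. With `s² = a t^{2γ}` this gives
`t^{-2ν} μ[0,t) ≤ (1+a) a^{θ-1} ‖x‖²` for every `a > 0`, and `(1+a) a^{θ-1}` attains its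
minimum `N_θ²` at `a = (1-θ)/θ` (for `θ = 0` let `a → ∞`).
-/

open MeasureTheory Set Filter Topology
open scoped ENNReal

lemma lintegral_Ioo_zero_one_rpow_neg {θ : ℝ} (hθ : θ < 1) :
    ∫⁻ u in Ioo (0 : ℝ) 1, ENNReal.ofReal (u ^ (-θ)) = ENNReal.ofReal (1 - θ)⁻¹ := by
  have hint : IntegrableOn (fun u : ℝ => u ^ (-θ)) (Ioc 0 1) := by
    have := intervalIntegral.intervalIntegrable_rpow' (r := -θ) (by linarith) (a := 0) (b := 1)
    rwa [intervalIntegrable_iff, uIoc_of_le zero_le_one] at this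
  rw [← ofReal_integral_eq_lintegral_ofReal (hint.mono_set Ioo_subset_Ioc_self)]
  · rw [← integral_Ioc_eq_integral_Ioo, ← intervalIntegral.integral_of_le zero_le_one,
      integral_rpow (Or.inl (by linarith)), Real.one_rpow, Real.zero_rpow (by linarith)]
    congr 1
    field_simp
    ring
  · filter_upwards [self_mem_ae_restrict measurableSet_Ioo] with u hu
    exact Real.rpow_nonneg hu.1.le _

lemma ae_nonneg_of_measure_Iio_zero {μ : Measure ℝ} (hsupp : μ (Iio 0) = 0) :
    ∀ᵐ l ∂μ, 0 ≤ l := by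
  filter_upwards [measure_eq_zero_iff_ae_notMem.1 hsupp] with l hl
  simpa using hl

lemma one_add_div_mul_rpow_eq {θ : ℝ} (hθ0 : 0 < θ) (hθ1 : θ < 1) :
    (1 + (1 - θ) / θ) * ((1 - θ) / θ) ^ (θ - 1) = (θ ^ θ * (1 - θ) ^ (1 - θ))⁻¹ := by
  have h1θ : 0 < 1 - θ := by linarith
  rw [Real.div_rpow h1θ.le hθ0.le, show θ - 1 = -(1 - θ) by ring, Real.rpow_neg h1θ.le,
    Real.rpow_neg hθ0.le]
  have hθθ : θ ^ (1 - θ) * θ ^ θ = θ := by rw [← Real.rpow_add hθ0]; simp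
  have : 0 < θ ^ θ := by positivity
  have : 0 < (1 - θ) ^ (1 - θ) := by positivity
  field_simp
  linear_combination hθθ

lemma le_mul_of_forall_le_one_add_mul_rpow {θ : ℝ} (hθ0 : 0 ≤ θ) (hθ1 : θ < 1)
    {C K : ℝ≥0∞}
    (h : ∀ a : ℝ, 0 < a → C ≤ ENNReal.ofReal ((1 + a) * a ^ (θ - 1)) * K) :
    C ≤ ENNReal.ofReal ((θ ^ θ * (1 - θ) ^ (1 - θ))⁻¹) * K := by
  rcases hθ0.eq_or_lt with rfl | hθ0
  · have hlim : Tendsto (fun a : ℝ => ENNReal.ofReal ((1 + a) * a ^ ((0 : ℝ) - 1)) * K) atTop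
        (𝓝 (ENNReal.ofReal 1 * K)) := by
      refine ENNReal.Tendsto.mul_const (ENNReal.tendsto_ofReal ?_) (by simp)
      have : Tendsto (fun a : ℝ => a⁻¹ + 1) atTop (𝓝 1) := by
        simpa using tendsto_inv_atTop_zero.add_const (1 : ℝ)
      refine this.congr' ?_
      filter_upwards [eventually_gt_atTop 0] with a ha
      rw [zero_sub, Real.rpow_neg_one]
      field_simp
    simpa using ge_of_tendsto hlim (eventually_gt_atTop 0 |>.mono h)
  · rw [← one_add_div_mul_rpow_eq hθ0 hθ1]
    exact h _ (div_pos (by linarith) hθ0)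

section Kernel

variable {μ : Measure ℝ} {ν γ t u : ℝ}

lemma setOf_lt_kernel_subset (hγ : 0 < γ) (hu : 0 < u) :
    {l : ℝ | u < t ^ 2 / (t ^ 2 + l ^ (2 * γ))} ⊆
      Iio 0 ∪ Ico 0 ((t ^ 2 / u) ^ (2 * γ)⁻¹) := by
  intro l hl
  rcases lt_or_ge l 0 with hl0 | hl0
  · exact Or.inl hl0
  have hlγ : 0 ≤ l ^ (2 * γ) := Real.rpow_nonneg hl0 _
  have hl' : u < t ^ 2 / (t ^ 2 + l ^ (2 * γ)) := hl
  have hpos : 0 < t ^ 2 + l ^ (2 * γ) := by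
    by_contra! h
    linarith [div_nonpos_of_nonneg_of_nonpos (sq_nonneg t) h]
  have hlt : u * (t ^ 2 + l ^ (2 * γ)) < t ^ 2 := (lt_div_iff₀ hpos).1 hl'
  refine Or.inr ⟨hl0, (Real.lt_rpow_inv_iff_of_pos hl0 (by positivity) (by positivity)).2 ?_⟩
  rw [lt_div_iff₀ hu]
  nlinarith

lemma setOf_lt_kernel_subset_Iio (hu : 1 ≤ u) :
    {l : ℝ | u < t ^ 2 / (t ^ 2 + l ^ (2 * γ))} ⊆ Iio 0 := by
  intro l hl
  rw [mem_Iio]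
  by_contra! hl0
  have : t ^ 2 / (t ^ 2 + l ^ (2 * γ)) ≤ 1 :=
    div_le_one_of_le₀ (le_add_of_nonneg_right (Real.rpow_nonneg hl0 _)) (by positivity)
  exact absurd (hu.trans_lt hl) this.not_gt

lemma measure_Ico_le_rpow_mul {ν r : ℝ} {S : ℝ≥0∞} (hr : 0 < r)
    (hS : ENNReal.ofReal (r ^ (-(2 * ν))) * μ (Ico 0 r) ≤ S) :
    μ (Ico 0 r) ≤ ENNReal.ofReal (r ^ (2 * ν)) * S := by
  calc μ (Ico 0 r)
      = ENNReal.ofReal (r ^ (2 * ν)) * (ENNReal.ofReal (r ^ (-(2 * ν))) * μ (Ico 0 r)) := by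
        rw [← mul_assoc, ← ENNReal.ofReal_mul (by positivity), ← Real.rpow_add hr]
        simp
    _ ≤ _ := by gcongr

lemma lintegral_kernel_le (hsupp : μ (Iio 0) = 0) (hγ : 0 < γ) (hνγ : ν < γ) (ht : 0 < t)
    {S : ℝ≥0∞} (hS : ∀ r, 0 < r → ENNReal.ofReal (r ^ (-(2 * ν))) * μ (Ico 0 r) ≤ S) :
    ∫⁻ l, ENNReal.ofReal (t ^ 2 / (t ^ 2 + l ^ (2 * γ))) ∂μ
      ≤ ENNReal.ofReal (t ^ (2 * ν / γ)) * ENNReal.ofReal (1 - ν / γ)⁻¹ * S := by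
  have hθ : ν / γ < 1 := (div_lt_one hγ).2 hνγ
  have hnn : 0 ≤ᵐ[μ] fun l => t ^ 2 / (t ^ 2 + l ^ (2 * γ)) := by
    filter_upwards [ae_nonneg_of_measure_Iio_zero hsupp] with l hl
    positivity
  have level : ∀ u ∈ Ioi (0 : ℝ), μ {l | u < t ^ 2 / (t ^ 2 + l ^ (2 * γ))} ≤
      (Ioo 0 1).indicator (fun u => ENNReal.ofReal (t ^ (2 * ν / γ)) * S *
        ENNReal.ofReal (u ^ (-(ν / γ)))) u := by
    intro u (hu : 0 < u)
    rcases lt_or_ge u 1 with hu1 | hu1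
    · rw [indicator_of_mem (show u ∈ Ioo 0 1 from ⟨hu, hu1⟩)]
      have hr : 0 < (t ^ 2 / u) ^ (2 * γ)⁻¹ := by positivity
      have hpow :
          ((t ^ 2 / u) ^ (2 * γ)⁻¹) ^ (2 * ν) = t ^ (2 * ν / γ) * u ^ (-(ν / γ)) := by
        rw [← Real.rpow_mul (by positivity), Real.div_rpow (by positivity) hu.le,
          Real.rpow_neg hu.le, ← Real.rpow_natCast, ← Real.rpow_mul ht.le]
        field_simp
        norm_num
      calc μ {l | u < t ^ 2 / (t ^ 2 + l ^ (2 * γ))}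
          ≤ μ (Iio 0 ∪ Ico 0 ((t ^ 2 / u) ^ (2 * γ)⁻¹)) :=
            measure_mono (setOf_lt_kernel_subset hγ hu)
        _ ≤ μ (Ico 0 ((t ^ 2 / u) ^ (2 * γ)⁻¹)) :=
            (measure_union_le _ _).trans_eq (by rw [hsupp, zero_add])
        _ ≤ _ := measure_Ico_le_rpow_mul hr (hS _ hr)
        _ = _ := by rw [hpow, ENNReal.ofReal_mul (by positivity)]; ring
    · rw [indicator_of_notMem fun h => h.2.not_ge hu1]
      exact (measure_mono_null (setOf_lt_kernel_subset_Iio hu1) hsupp).le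
  calc ∫⁻ l, ENNReal.ofReal (t ^ 2 / (t ^ 2 + l ^ (2 * γ))) ∂μ
      = ∫⁻ u in Ioi 0, μ {l | u < t ^ 2 / (t ^ 2 + l ^ (2 * γ))} :=
        lintegral_eq_lintegral_meas_lt μ hnn (by fun_prop)
    _ ≤ ∫⁻ u in Ioi 0, (Ioo 0 1).indicator (fun u => ENNReal.ofReal (t ^ (2 * ν / γ)) * S *
          ENNReal.ofReal (u ^ (-(ν / γ)))) u := setLIntegral_mono' measurableSet_Ioi level
    _ = ENNReal.ofReal (t ^ (2 * ν / γ)) * S *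
          ∫⁻ u in Ioo 0 1, ENNReal.ofReal (u ^ (-(ν / γ))) := by
        rw [lintegral_indicator measurableSet_Ioo, Measure.restrict_restrict measurableSet_Ioo,
          inter_eq_self_of_subset_left Ioo_subset_Ioi_self, lintegral_const_mul _ (by fun_prop)]
    _ = _ := by rw [lintegral_Ioo_zero_one_rpow_neg hθ]; ring

lemma ofReal_mul_measure_Ico_le_lintegral_kernel (hγ : 0 ≤ γ) {s : ℝ} (hs : s ≠ 0) :
    ENNReal.ofReal (s ^ 2 / (s ^ 2 + t ^ (2 * γ))) * μ (Ico 0 t)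
      ≤ ∫⁻ l, ENNReal.ofReal (s ^ 2 / (s ^ 2 + l ^ (2 * γ))) ∂μ := by
  rw [← setLIntegral_const]
  refine (setLIntegral_mono' measurableSet_Ico fun l hl => ?_).trans
    (setLIntegral_le_lintegral _ _)
  have hl0 : 0 ≤ l := hl.1
  refine ENNReal.ofReal_le_ofReal (div_le_div_of_nonneg_left (sq_nonneg s) (by positivity) ?_)
  gcongr
  exact hl.2.le

lemma ofReal_rpow_mul_measure_Ico_le (hγ : 0 < γ) (ht : 0 < t) {a : ℝ} (ha : 0 < a)
    {S : ℝ≥0∞}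
    (hS : ∀ s, 0 < s → ENNReal.ofReal (s ^ (-(2 * ν / γ))) *
      ∫⁻ l, ENNReal.ofReal (s ^ 2 / (s ^ 2 + l ^ (2 * γ))) ∂μ ≤ S) :
    ENNReal.ofReal (t ^ (-(2 * ν))) * μ (Ico 0 t)
      ≤ ENNReal.ofReal ((1 + a) * a ^ (ν / γ - 1)) * S := by
  set s := √a * t ^ γ
  have hs : 0 < s := by positivity
  have hs2 : s ^ 2 = a * t ^ (2 * γ) := by
    rw [mul_pow, Real.sq_sqrt ha.le, ← Real.rpow_natCast, ← Real.rpow_mul ht.le, mul_comm γ]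
    norm_num
  have hkernel : s ^ 2 / (s ^ 2 + t ^ (2 * γ)) = a / (1 + a) := by
    rw [hs2]
    field_simp
    ring
  have hsθ : s ^ (-(2 * ν / γ)) = (a ^ (ν / γ))⁻¹ * t ^ (-(2 * ν)) := by
    rw [show -(2 * ν / γ) = 2 * (-(ν / γ)) by ring, Real.rpow_mul hs.le, Real.rpow_two, hs2,
      Real.mul_rpow ha.le (by positivity), ← Real.rpow_mul ht.le, Real.rpow_neg ha.le]
    congr 2
    field_simp
  have hweight :
      t ^ (-(2 * ν)) = (1 + a) * a ^ (ν / γ - 1) * s ^ (-(2 * ν / γ)) * (a / (1 + a)) := by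
    rw [hsθ, Real.rpow_sub ha, Real.rpow_one]
    have : 0 < a ^ (ν / γ) := by positivity
    field_simp
  calc ENNReal.ofReal (t ^ (-(2 * ν))) * μ (Ico 0 t)
      = ENNReal.ofReal ((1 + a) * a ^ (ν / γ - 1)) * (ENNReal.ofReal (s ^ (-(2 * ν / γ))) *
          (ENNReal.ofReal (s ^ 2 / (s ^ 2 + t ^ (2 * γ))) * μ (Ico 0 t))) := by
        rw [hweight, hkernel, ENNReal.ofReal_mul (by positivity),
          ENNReal.ofReal_mul (by positivity), ENNReal.ofReal_mul (by positivity)]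
        ring
    _ ≤ ENNReal.ofReal ((1 + a) * a ^ (ν / γ - 1)) * S := by
        gcongr
        calc _ ≤ _ := by gcongr; exact ofReal_mul_measure_Ico_le_lintegral_kernel hγ.le hs.ne'
          _ ≤ S := hS s hs

lemma one_sub_mul_rpow_mul_lintegral_kernel_le (hsupp : μ (Iio 0) = 0) (hγ : 0 < γ)
    (hνγ : ν < γ) (ht : 0 < t) {S : ℝ≥0∞}
    (hS : ∀ r, 0 < r → ENNReal.ofReal (r ^ (-(2 * ν))) * μ (Ico 0 r) ≤ S) :
    ENNReal.ofReal (1 - ν / γ) * (ENNReal.ofReal (t ^ (-(2 * ν / γ))) *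
      ∫⁻ l, ENNReal.ofReal (t ^ 2 / (t ^ 2 + l ^ (2 * γ))) ∂μ) ≤ S := by
  have hθ : 0 < 1 - ν / γ := sub_pos.2 ((div_lt_one hγ).2 hνγ)
  calc _ ≤ ENNReal.ofReal (1 - ν / γ) * (ENNReal.ofReal (t ^ (-(2 * ν / γ))) *
        (ENNReal.ofReal (t ^ (2 * ν / γ)) * ENNReal.ofReal (1 - ν / γ)⁻¹ * S)) := by
        gcongr
        exact lintegral_kernel_le hsupp hγ hνγ ht hS
    _ = ENNReal.ofReal ((1 - ν / γ) * (t ^ (-(2 * ν / γ)) * t ^ (2 * ν / γ)) *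
          (1 - ν / γ)⁻¹) * S := by
        rw [ENNReal.ofReal_mul (by positivity), ENNReal.ofReal_mul (by positivity),
          ENNReal.ofReal_mul (by positivity)]
        ring
    _ = S := by
        rw [Real.rpow_neg ht.le, inv_mul_cancel₀ (by positivity), mul_one, mul_inv_cancel₀ hθ.ne']
        simp

end Kernel

/-- Both norms enter squared, and `μ` stands for the spectral measure `μ_x`. -/
theorem stmt9_general (μ : Measure ℝ) (hsupp : μ (Iio 0) = 0)
    (ν γ : ℝ) (hν : 0 ≤ ν) (hγ : ν < γ) :
    ENNReal.ofReal (1 - ν/γ) *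
      (⨆ t ∈ Ioi (0:ℝ), ENNReal.ofReal (t ^ (-(2*ν/γ))) *
        ∫⁻ l, ENNReal.ofReal (t ^ 2 / (t ^ 2 + l ^ (2*γ))) ∂μ)
      ≤ (⨆ t ∈ Ioi (0:ℝ), ENNReal.ofReal (t ^ (-(2*ν))) * μ (Ico 0 t)) ∧
    (⨆ t ∈ Ioi (0:ℝ), ENNReal.ofReal (t ^ (-(2*ν))) * μ (Ico 0 t))
      ≤ ENNReal.ofReal (((ν/γ) ^ (ν/γ) * (1 - ν/γ) ^ (1 - ν/γ))⁻¹) *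
        (⨆ t ∈ Ioi (0:ℝ), ENNReal.ofReal (t ^ (-(2*ν/γ))) *
          ∫⁻ l, ENNReal.ofReal (t ^ 2 / (t ^ 2 + l ^ (2*γ))) ∂μ) := by
  have hγ0 : 0 < γ := hν.trans_lt hγ
  constructor
  · simp only [ENNReal.mul_iSup]
    exact iSup₂_le fun t ht => one_sub_mul_rpow_mul_lintegral_kernel_le hsupp hγ0 hγ ht
      fun r hr => le_iSup₂_of_le r hr le_rfl
  · exact iSup₂_le fun t ht => le_mul_of_forall_le_one_add_mul_rpow (div_nonneg hν hγ0.le)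
      ((div_lt_one hγ0).2 hγ) fun a ha => ofReal_rpow_mul_measure_Ico_le hγ0 ht ha
        fun s hs => le_iSup₂_of_le s hs le_rfl

/-- Proposition: `√(1-ν/γ) ‖x‖_{ν:γ} ≤ |||x|||_ν ≤ N_{ν/γ} ‖x‖_{ν:γ}` (squared form).
The spectral measure `μ_x(A) = ‖E_A x‖²` of `T*T` applied to `x` is modelled by a
finite Borel measure `μ` on `[0,∞)`.  Here
`‖x‖_{ν:γ}² = sup_{t>0} t^(-2ν/γ) ∫ t²/(t²+λ^(2γ)) dμ(λ)` and
`|||x|||_ν² = sup_{t>0} t^(-2ν) μ([0,t))`, `N_{ν/γ}² = ((ν/γ)^(ν/γ)(1-ν/γ)^(1-ν/γ))⁻¹`. -/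
theorem stmt9 (μ : Measure ℝ) [IsFiniteMeasure μ] (hsupp : μ (Iio 0) = 0)
    (ν γ : ℝ) (hν : 0 ≤ ν) (hγ : ν < γ) :
    ENNReal.ofReal (1 - ν/γ) *
      (⨆ t ∈ Ioi (0:ℝ), ENNReal.ofReal (t ^ (-(2*ν/γ))) *
        ∫⁻ l, ENNReal.ofReal (t ^ 2 / (t ^ 2 + l ^ (2*γ))) ∂μ)
      ≤ (⨆ t ∈ Ioi (0:ℝ), ENNReal.ofReal (t ^ (-(2*ν))) * μ (Ico 0 t)) ∧
    (⨆ t ∈ Ioi (0:ℝ), ENNReal.ofReal (t ^ (-(2*ν))) * μ (Ico 0 t))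
      ≤ ENNReal.ofReal (((ν/γ) ^ (ν/γ) * (1 - ν/γ) ^ (1 - ν/γ))⁻¹) *
        (⨆ t ∈ Ioi (0:ℝ), ENNReal.ofReal (t ^ (-(2*ν/γ))) *
          ∫⁻ l, ENNReal.ofReal (t ^ 2 / (t ^ 2 + l ^ (2*γ))) ∂μ) :=
  stmt9_general μ hsupp ν γ hν hγ
end

section
/- In the setting of a bounded injective operator T between Hilbert spaces with spectral measure E of T*T, for 0 ≤ ν ≤ γ and x in the range of (T*T)^ν, one has N_{ν/γ} ‖x‖_{ν:γ} ≤ ‖(T*T)^{-ν} x‖ ≤ ‖T*T‖^{γ-ν} ‖(T*T)^{-γ} x‖, where the last inequality requires x in the range of (T*T)^γ. -/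
open MeasureTheory Set

lemma amgm (θ a b : ℝ) (hθ0 : 0 ≤ θ) (hθ1 : θ ≤ 1) (ha : 0 ≤ a) (hb : 0 ≤ b) :
    a ^ (1-θ) * b ^ θ ≤ θ^θ * (1-θ)^(1-θ) * (a+b) := by
  rcases eq_or_lt_of_le hθ0 with h0 | h0
  · simp [← h0]; nlinarith [hb]
  rcases eq_or_lt_of_le hθ1 with h1 | h1
  · simp [h1]; nlinarith [ha]
  have h1' : 0 < 1 - θ := by linarith
  have key := Real.geom_mean_le_arith_mean2_weighted (le_of_lt h1') hθ0
    (div_nonneg ha h1'.le) (div_nonneg hb h0.le) (by ring)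
  rw [Real.div_rpow ha h1'.le, Real.div_rpow hb h0.le] at key
  have heq : (1-θ) * (a/(1-θ)) + θ * (b/θ) = a + b := by field_simp
  rw [heq, div_mul_div_comm, div_le_iff₀ (by positivity)] at key
  calc a ^ (1-θ) * b ^ θ ≤ (a+b) * ((1-θ)^(1-θ) * θ^θ) := key
    _ = θ^θ * (1-θ)^(1-θ) * (a+b) := by ring

lemma keypt (ν γ t l : ℝ) (hν : 0 ≤ ν) (hνγ : ν ≤ γ) (ht : 0 < t) (hl : 0 < l) :
    ((ν/γ) ^ (ν/γ) * (1 - ν/γ) ^ (1 - ν/γ))⁻¹ *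
      (t ^ (-(2*ν/γ)) * (t ^ 2 / (t ^ 2 + l ^ (2*γ)))) ≤ l ^ (-(2*ν)) := by
  rcases eq_or_lt_of_le (hν.trans hνγ) with hγ | hγ
  · -- γ = 0, hence ν = 0
    have hν0 : ν = 0 := le_antisymm (hνγ.trans_eq hγ.symm) hν
    rw [hν0, ← hγ]
    norm_num
    rw [div_le_one (by positivity)]
    nlinarith [sq_nonneg t]
  set θ := ν/γ with hθdef
  have hθ0 : 0 ≤ θ := div_nonneg hν hγ.le
  have hθ1 : θ ≤ 1 := (div_le_one hγ).mpr hνγ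
  set a := t ^ 2 with hadef
  set b := l ^ (2*γ) with hbdef
  have ha : 0 < a := by positivity
  have hb : 0 < b := Real.rpow_pos_of_pos hl _
  have hC : 0 < θ^θ * (1-θ)^(1-θ) := by
    have h1 : 0 < θ^θ := by
      rcases eq_or_lt_of_le hθ0 with h|h
      · rw [← h]; norm_num
      · exact Real.rpow_pos_of_pos h _
    have h2 : 0 < (1-θ)^(1-θ) := by
      rcases eq_or_lt_of_le hθ1 with h|h
      · rw [h]; norm_num
      · exact Real.rpow_pos_of_pos (by linarith) _
    exact mul_pos h1 h2
  -- rewrite t ^ (-(2ν/γ)) * t^2 = a ^ (1-θ)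
  have hts : t ^ (-(2*ν/γ)) * (t:ℝ) ^ (2:ℕ) = a ^ (1-θ) := by
    rw [hadef, ← Real.rpow_natCast t 2, ← Real.rpow_mul ht.le, ← Real.rpow_add ht]
    rw [hθdef]
    congr 1
    field_simp
    ring
  -- rewrite l ^ (-(2ν)) = b ^ (-θ)
  have hls : l ^ (-(2*ν)) = b ^ (-θ) := by
    rw [hbdef, ← Real.rpow_mul hl.le]
    rw [hθdef]
    congr 1
    field_simp
  have hbθ : b ^ θ * b ^ (-θ) = 1 := by
    rw [← Real.rpow_add hb]; simp
  have hmain := amgm θ a b hθ0 hθ1 ha.le hb.le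
  rw [hls, ← mul_div_assoc, hts, inv_mul_le_iff₀ hC, div_le_iff₀ (by positivity)]
  calc a ^ (1-θ) = a ^ (1-θ) * b ^ θ * b ^ (-θ) := by rw [mul_assoc, hbθ, mul_one]
    _ ≤ θ^θ * (1-θ)^(1-θ) * (a+b) * b ^ (-θ) := by
        apply mul_le_mul_of_nonneg_right hmain (Real.rpow_pos_of_pos hb _).le
    _ = θ^θ * (1-θ)^(1-θ) * b ^ (-θ) * (a+b) := by ring


/-- `N_{ν/γ} ‖x‖_{ν:γ} ≤ ‖x‖_ν ≤ ‖T*T‖^(γ-ν) ‖x‖_γ` (squared form).  The spectral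
measure of `T*T` applied to `x` is modelled by a finite Borel measure `μ` supported
in `[0, R]` with `R = ‖T*T‖` and `μ({0}) = 0` (injectivity).  Here
`‖x‖_ν² = ∫ λ^(-2ν) dμ(λ)` (finite iff `x ∈ range (T*T)^ν`), and
`‖x‖_{ν:γ}² = sup_{t>0} t^(-2ν/γ) ∫ t²/(t²+λ^(2γ)) dμ(λ)`. -/
theorem stmt10 (μ : Measure ℝ) [IsFiniteMeasure μ]
    (R : ℝ) (hR : 0 < R) (hsupp : μ (Iio 0) = 0) (hsuppR : μ (Ioi R) = 0)
    (hzero : μ {0} = 0)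
    (ν γ : ℝ) (hν : 0 ≤ ν) (hνγ : ν ≤ γ) :
    ENNReal.ofReal (((ν/γ) ^ (ν/γ) * (1 - ν/γ) ^ (1 - ν/γ))⁻¹) *
      (⨆ t ∈ Ioi (0:ℝ), ENNReal.ofReal (t ^ (-(2*ν/γ))) *
        ∫⁻ l, ENNReal.ofReal (t ^ 2 / (t ^ 2 + l ^ (2*γ))) ∂μ)
      ≤ ∫⁻ l, ENNReal.ofReal (l ^ (-(2*ν))) ∂μ ∧
    ∫⁻ l, ENNReal.ofReal (l ^ (-(2*ν))) ∂μ
      ≤ ENNReal.ofReal (R ^ (2*(γ - ν))) * ∫⁻ l, ENNReal.ofReal (l ^ (-(2*γ))) ∂μ := by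
  have hae : ∀ᵐ l ∂μ, 0 < l ∧ l ≤ R := by
    rw [Filter.eventually_iff, mem_ae_iff]
    apply measure_mono_null (t := Iio 0 ∪ {0} ∪ Ioi R) ?_
      (measure_union_null (measure_union_null hsupp hzero) hsuppR)
    · intro l hl
      simp only [mem_compl_iff, mem_setOf_eq, not_and_or, not_lt, not_le] at hl
      rcases hl with h | h
      · rcases lt_or_eq_of_le h with h' | h'
        · exact Or.inl (Or.inl h')
        · exact Or.inl (Or.inr (by simp [h'.symm]))
      · exact Or.inr h
  have hγ0 : 0 ≤ ν/γ := by
    rcases eq_or_lt_of_le (hν.trans hνγ) with h | h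
    · rw [← h]; simp
    · exact div_nonneg hν h.le
  have hc : 0 ≤ ((ν/γ) ^ (ν/γ) * (1 - ν/γ) ^ (1 - ν/γ))⁻¹ :=
    inv_nonneg.mpr (mul_nonneg (Real.rpow_nonneg hγ0 _)
      (Real.rpow_nonneg (by nlinarith [div_le_one_of_le₀ hνγ (hν.trans hνγ)] : (0:ℝ) ≤ 1 - ν/γ) _))
  constructor
  · rw [ENNReal.mul_iSup]
    apply iSup_le; intro t
    rw [ENNReal.mul_iSup]
    apply iSup_le; intro ht
    have ht' : 0 < t := ht
    have h1 : ENNReal.ofReal (((ν/γ) ^ (ν/γ) * (1 - ν/γ) ^ (1 - ν/γ))⁻¹) *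
        (ENNReal.ofReal (t ^ (-(2*ν/γ))) * ∫⁻ l, ENNReal.ofReal (t ^ 2 / (t ^ 2 + l ^ (2*γ))) ∂μ)
        = ∫⁻ l, ENNReal.ofReal (((ν/γ) ^ (ν/γ) * (1 - ν/γ) ^ (1 - ν/γ))⁻¹ *
            (t ^ (-(2*ν/γ)) * (t ^ 2 / (t ^ 2 + l ^ (2*γ))))) ∂μ := by
      rw [← lintegral_const_mul' _ _ ENNReal.ofReal_ne_top,
          ← lintegral_const_mul' _ _ ENNReal.ofReal_ne_top]
      congr 1; funext l
      rw [← ENNReal.ofReal_mul (by positivity), ← ENNReal.ofReal_mul hc]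
    rw [h1]
    refine lintegral_mono_ae (hae.mono fun l hl => ?_)
    exact ENNReal.ofReal_le_ofReal (keypt ν γ t l hν hνγ ht' hl.1)
  · rw [← lintegral_const_mul' _ _ ENNReal.ofReal_ne_top]
    refine lintegral_mono_ae (hae.mono fun l hl => ?_)
    obtain ⟨hl0, hlR⟩ := hl
    rw [← ENNReal.ofReal_mul (by positivity)]
    apply ENNReal.ofReal_le_ofReal
    have heq : l ^ (-(2*ν)) = l ^ (2*(γ-ν)) * l ^ (-(2*γ)) := by
      rw [← Real.rpow_add hl0]; congr 1; ring
    rw [heq]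
    exact mul_le_mul_of_nonneg_right (Real.rpow_le_rpow hl0.le hlR (by linarith))
      (Real.rpow_nonneg hl0.le _)
end

section
/- For the norms |||·|||_ν and ‖·‖_{ν:2ν} defined via the spectral measure of T*T, one has (1/√2)·|||x|||_ν ≤ ‖x‖_{ν:2ν} ≤ √2·|||x|||_ν for all x and all ν > 0; hence the spaces X_{ν:2ν} and 𝕏_ν coincide with norm equivalence uniform in ν. -/
/-!
The lower bound is pointwise: with `t = s ^ (2ν)`, the integrand `t² / (t² + λ^(4ν))` is at
least `1/2` on `[0, s)`. For the upper bound write the integral by the layer-cake formula as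
`∫₀¹ μ {λ | u < t² / (t² + λ^(4ν))} du`; this superlevel set lies in `[0, r)` with
`r^(2ν) = t u^(-1/2)`, so its measure is at most `t u^(-1/2) |||x|||_ν²`, and `∫₀¹ u^(-1/2) du = 2`.
-/

open MeasureTheory Set ENNReal

theorem lintegral_Ioo_rpow_neg_half :
    ∫⁻ u in Ioo (0:ℝ) 1, ENNReal.ofReal (u ^ (-(1/2) : ℝ)) = 2 := by
  have hint : IntegrableOn (fun u : ℝ => u ^ (-(1/2) : ℝ)) (Ioo 0 1) :=
    ((intervalIntegrable_iff_integrableOn_Ioc_of_le zero_le_one).mp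
      (intervalIntegral.intervalIntegrable_rpow' (by norm_num))).mono_set Ioo_subset_Ioc_self
  have hnn : 0 ≤ᵐ[volume.restrict (Ioo (0:ℝ) 1)] fun u : ℝ => u ^ (-(1/2) : ℝ) :=
    (ae_restrict_mem measurableSet_Ioo).mono fun u hu => Real.rpow_nonneg hu.1.le _
  rw [← ofReal_integral_eq_lintegral_ofReal hint hnn, ← integral_Ioc_eq_integral_Ioo,
    ← intervalIntegral.integral_of_le zero_le_one, integral_rpow (Or.inl (by norm_num))]
  norm_num

theorem lintegral_ofReal_le_two_mul_of_meas_lt_le {α : Type*} [MeasurableSpace α]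
    {μ : Measure α} {f : α → ℝ} {C : ℝ≥0∞}
    (hf0 : 0 ≤ᵐ[μ] f) (hf1 : ∀ᵐ a ∂μ, f a ≤ 1) (hfm : AEMeasurable f μ)
    (hC : ∀ u ∈ Ioo (0:ℝ) 1, μ {a | u < f a} ≤ C * ENNReal.ofReal (u ^ (-(1/2) : ℝ))) :
    ∫⁻ a, ENNReal.ofReal (f a) ∂μ ≤ 2 * C := by
  have hIci : ∫⁻ u in Ici (1:ℝ), μ {a | u < f a} = 0 := by
    refine (setLIntegral_congr_fun measurableSet_Ici fun u (hu : 1 ≤ u) => ?_).trans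
      lintegral_zero
    exact measure_mono_null (fun a ha => not_le.mpr (hu.trans_lt ha)) (ae_iff.mp hf1)
  calc ∫⁻ a, ENNReal.ofReal (f a) ∂μ
      = ∫⁻ u in Ioo 0 1 ∪ Ici 1, μ {a | u < f a} := by
        rw [lintegral_eq_lintegral_meas_lt μ hf0 hfm, Ioo_union_Ici_eq_Ioi zero_lt_one]
    _ ≤ (∫⁻ u in Ioo 0 1, μ {a | u < f a}) + ∫⁻ u in Ici 1, μ {a | u < f a} :=
        lintegral_union_le _ _ _
    _ ≤ ∫⁻ u in Ioo 0 1, C * ENNReal.ofReal (u ^ (-(1/2) : ℝ)) := by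
        rw [hIci, add_zero]
        exact setLIntegral_mono' measurableSet_Ioo hC
    _ = 2 * C := by
        rw [lintegral_const_mul _ (by fun_prop), lintegral_Ioo_rpow_neg_half, mul_comm]

-- `|||x|||_ν²` and `‖x‖_{ν:γ}²` of the paper, for `μ = μ_x`.
noncomputable def tripleNormSq (μ : Measure ℝ) (ν : ℝ) : ℝ≥0∞ :=
  ⨆ t ∈ Ioi (0:ℝ), ENNReal.ofReal (t ^ (-(2*ν))) * μ (Ico 0 t)

noncomputable def mixedNormSq (μ : Measure ℝ) (ν γ : ℝ) : ℝ≥0∞ :=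
  ⨆ t ∈ Ioi (0:ℝ), ENNReal.ofReal (t ^ (-(2*ν/γ))) *
    ∫⁻ l, ENNReal.ofReal (t ^ 2 / (t ^ 2 + l ^ (2*γ))) ∂μ

section

variable {μ : Measure ℝ} {ν : ℝ}

theorem measure_Ico_le_two_mul_lintegral {c s t : ℝ} (hc : 0 ≤ c) (ht : 0 < t)
    (hst : s ^ c ≤ t ^ 2) :
    μ (Ico 0 s) ≤ 2 * ∫⁻ l, ENNReal.ofReal (t ^ 2 / (t ^ 2 + l ^ c)) ∂μ := by
  have half_le : ∀ l ∈ Ico 0 s, 2⁻¹ ≤ ENNReal.ofReal (t ^ 2 / (t ^ 2 + l ^ c)) := by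
    intro l hl
    have hlc : l ^ c ≤ t ^ 2 := (Real.rpow_le_rpow hl.1 hl.2.le hc).trans hst
    have hlc0 : 0 ≤ l ^ c := Real.rpow_nonneg hl.1 c
    rw [← ENNReal.ofReal_ofNat 2, ← ENNReal.ofReal_inv_of_pos two_pos]
    refine ENNReal.ofReal_le_ofReal ?_
    rw [le_div_iff₀ (by positivity)]
    linarith
  calc μ (Ico 0 s) = 2 * ∫⁻ _ in Ico 0 s, 2⁻¹ ∂μ := by
        rw [setLIntegral_const, ← mul_assoc, ENNReal.mul_inv_cancel two_ne_zero ofNat_ne_top,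
          one_mul]
    _ ≤ 2 * ∫⁻ l in Ico 0 s, ENNReal.ofReal (t ^ 2 / (t ^ 2 + l ^ c)) ∂μ := by
        gcongr 2 * ?_
        exact setLIntegral_mono' measurableSet_Ico half_le
    _ ≤ 2 * ∫⁻ l, ENNReal.ofReal (t ^ 2 / (t ^ 2 + l ^ c)) ∂μ := by
        gcongr
        exact Measure.restrict_le_self

theorem tripleNormSq_le_two_mul_mixedNormSq (hν : 0 < ν) :
    tripleNormSq μ ν ≤ 2 * mixedNormSq μ ν (2*ν) := by
  refine iSup₂_le fun s (hs : 0 < s) => ?_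
  set t := s ^ (2*ν)
  have ht : 0 < t := Real.rpow_pos_of_pos hs _
  have hst : s ^ (2*(2*ν)) = t ^ 2 := by
    rw [mul_comm, Real.rpow_mul hs.le, Real.rpow_two]
  have hscale : ENNReal.ofReal (s ^ (-(2*ν))) = ENNReal.ofReal (t ^ (-(2*ν/(2*ν)))) := by
    rw [div_self (by positivity), Real.rpow_neg_one, Real.rpow_neg hs.le]
  calc ENNReal.ofReal (s ^ (-(2*ν))) * μ (Ico 0 s)
      ≤ ENNReal.ofReal (t ^ (-(2*ν/(2*ν)))) *
          (2 * ∫⁻ l, ENNReal.ofReal (t ^ 2 / (t ^ 2 + l ^ (2*(2*ν)))) ∂μ) := by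
        rw [hscale]
        gcongr
        exact measure_Ico_le_two_mul_lintegral (by positivity) ht hst.le
    _ = 2 * (ENNReal.ofReal (t ^ (-(2*ν/(2*ν)))) *
          ∫⁻ l, ENNReal.ofReal (t ^ 2 / (t ^ 2 + l ^ (2*(2*ν)))) ∂μ) := mul_left_comm _ _ _
    _ ≤ 2 * mixedNormSq μ ν (2*ν) := by
        gcongr
        exact le_iSup₂ (f := fun t (_ : t ∈ Ioi (0:ℝ)) => ENNReal.ofReal (t ^ (-(2*ν/(2*ν)))) *
          ∫⁻ l, ENNReal.ofReal (t ^ 2 / (t ^ 2 + l ^ (2*(2*ν)))) ∂μ) t ht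

theorem measure_Ico_le_ofReal_rpow_mul_tripleNormSq {t : ℝ} (ht : 0 < t) :
    μ (Ico 0 t) ≤ ENNReal.ofReal (t ^ (2*ν)) * tripleNormSq μ ν := by
  calc μ (Ico 0 t)
      = ENNReal.ofReal (t ^ (2*ν)) * (ENNReal.ofReal (t ^ (-(2*ν))) * μ (Ico 0 t)) := by
        rw [← mul_assoc, ← ENNReal.ofReal_mul (by positivity), ← Real.rpow_add ht,
          add_neg_cancel, Real.rpow_zero, ENNReal.ofReal_one, one_mul]
    _ ≤ ENNReal.ofReal (t ^ (2*ν)) * tripleNormSq μ ν := by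
        gcongr
        exact le_iSup₂ (f := fun t (_ : t ∈ Ioi (0:ℝ)) =>
          ENNReal.ofReal (t ^ (-(2*ν))) * μ (Ico 0 t)) t ht

theorem measure_superlevel_le_tripleNormSq (hsupp : μ (Iio 0) = 0) (hν : 0 < ν) {t u : ℝ}
    (ht : 0 < t) (hu : u ∈ Ioo (0:ℝ) 1) :
    μ {l | u < t ^ 2 / (t ^ 2 + l ^ (2*(2*ν)))}
      ≤ ENNReal.ofReal t * tripleNormSq μ ν * ENNReal.ofReal (u ^ (-(1/2) : ℝ)) := by
  obtain ⟨hu0, hu1⟩ := hu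
  set r := (t * u ^ (-(1/2) : ℝ)) ^ (2*ν)⁻¹
  have hr : 0 < r := by positivity
  have hr_pow : r ^ (2*ν) = t * u ^ (-(1/2) : ℝ) :=
    Real.rpow_inv_rpow (by positivity) (by positivity)
  have hr_pow' : r ^ (2*(2*ν)) = t ^ 2 / u := by
    rw [mul_comm, Real.rpow_mul hr.le, hr_pow, Real.rpow_two, mul_pow,
      ← Real.rpow_mul_natCast hu0.le]
    norm_num [div_eq_mul_inv, Real.rpow_neg_one]
  have hsub : {l | u < t ^ 2 / (t ^ 2 + l ^ (2*(2*ν)))} ⊆ Iio 0 ∪ Ico 0 r := by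
    intro l (hl : u < _)
    rcases lt_or_ge l 0 with hneg | hl0
    · exact Or.inl hneg
    refine Or.inr ⟨hl0, ?_⟩
    have hlc : 0 ≤ l ^ (2*(2*ν)) := Real.rpow_nonneg hl0 _
    rw [lt_div_iff₀ (by positivity)] at hl
    rw [← Real.rpow_lt_rpow_iff hl0 hr.le (by positivity : (0:ℝ) < 2*(2*ν)), hr_pow',
      lt_div_iff₀ hu0]
    nlinarith
  calc μ {l | u < t ^ 2 / (t ^ 2 + l ^ (2*(2*ν)))} ≤ μ (Iio 0) + μ (Ico 0 r) :=
        (measure_mono hsub).trans (measure_union_le _ _)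
    _ ≤ ENNReal.ofReal (r ^ (2*ν)) * tripleNormSq μ ν := by
        rw [hsupp, zero_add]
        exact measure_Ico_le_ofReal_rpow_mul_tripleNormSq hr
    _ = ENNReal.ofReal t * tripleNormSq μ ν * ENNReal.ofReal (u ^ (-(1/2) : ℝ)) := by
        rw [hr_pow, ENNReal.ofReal_mul ht.le]
        ring

theorem lintegral_le_two_mul_ofReal_mul_tripleNormSq (hsupp : μ (Iio 0) = 0) (hν : 0 < ν)
    {t : ℝ} (ht : 0 < t) :
    ∫⁻ l, ENNReal.ofReal (t ^ 2 / (t ^ 2 + l ^ (2*(2*ν)))) ∂μ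
      ≤ 2 * (ENNReal.ofReal t * tripleNormSq μ ν) := by
  have hnonneg : ∀ᵐ l ∂μ, 0 ≤ l := ae_iff.mpr (measure_mono_null (fun _ => not_le.mp) hsupp)
  refine lintegral_ofReal_le_two_mul_of_meas_lt_le ?_ ?_ (by fun_prop)
    (fun u hu => measure_superlevel_le_tripleNormSq hsupp hν ht hu)
  · filter_upwards [hnonneg] with l hl
    have := Real.rpow_nonneg hl (2*(2*ν))
    positivity
  · filter_upwards [hnonneg] with l hl
    rw [div_le_one (by positivity)]
    linarith [Real.rpow_nonneg hl (2*(2*ν))]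

theorem mixedNormSq_le_two_mul_tripleNormSq (hsupp : μ (Iio 0) = 0) (hν : 0 < ν) :
    mixedNormSq μ ν (2*ν) ≤ 2 * tripleNormSq μ ν := by
  refine iSup₂_le fun t (ht : 0 < t) => ?_
  rw [div_self (by positivity), Real.rpow_neg_one]
  calc ENNReal.ofReal t⁻¹ * ∫⁻ l, ENNReal.ofReal (t ^ 2 / (t ^ 2 + l ^ (2*(2*ν)))) ∂μ
      ≤ ENNReal.ofReal t⁻¹ * (2 * (ENNReal.ofReal t * tripleNormSq μ ν)) := by
        gcongr
        exact lintegral_le_two_mul_ofReal_mul_tripleNormSq hsupp hν ht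
    _ = 2 * tripleNormSq μ ν := by
        rw [mul_left_comm, ← mul_assoc (ENNReal.ofReal _), ← ENNReal.ofReal_mul (by positivity),
          inv_mul_cancel₀ ht.ne', ENNReal.ofReal_one, one_mul]

end

theorem stmt11_general (μ : Measure ℝ) (hsupp : μ (Iio 0) = 0)
    (ν : ℝ) (hν : 0 < ν) :
    (2 : ℝ≥0∞)⁻¹ * (⨆ t ∈ Ioi (0:ℝ), ENNReal.ofReal (t ^ (-(2*ν))) * μ (Ico 0 t))
      ≤ (⨆ t ∈ Ioi (0:ℝ), ENNReal.ofReal (t ^ (-(2*ν/(2*ν)))) *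
          ∫⁻ l, ENNReal.ofReal (t ^ 2 / (t ^ 2 + l ^ (2*(2*ν)))) ∂μ) ∧
    (⨆ t ∈ Ioi (0:ℝ), ENNReal.ofReal (t ^ (-(2*ν/(2*ν)))) *
        ∫⁻ l, ENNReal.ofReal (t ^ 2 / (t ^ 2 + l ^ (2*(2*ν)))) ∂μ)
      ≤ 2 * (⨆ t ∈ Ioi (0:ℝ), ENNReal.ofReal (t ^ (-(2*ν))) * μ (Ico 0 t)) :=
  ⟨(ENNReal.inv_mul_le_iff two_ne_zero ofNat_ne_top).mpr
      (tripleNormSq_le_two_mul_mixedNormSq (μ := μ) hν),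
    mixedNormSq_le_two_mul_tripleNormSq hsupp hν⟩

/-- `(1/√2)|||x|||_ν ≤ ‖x‖_{ν:2ν} ≤ √2 |||x|||_ν` (squared form), for all `ν > 0`
and all `x` (spectral measure modelled by a finite Borel measure `μ` on `[0,∞)`);
hence `X_{ν:2ν} = 𝕏_ν` with norm equivalence uniform in `ν`. -/
theorem stmt11 (μ : Measure ℝ) [IsFiniteMeasure μ] (hsupp : μ (Iio 0) = 0)
    (ν : ℝ) (hν : 0 < ν) :
    (2 : ℝ≥0∞)⁻¹ * (⨆ t ∈ Ioi (0:ℝ), ENNReal.ofReal (t ^ (-(2*ν))) * μ (Ico 0 t))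
      ≤ (⨆ t ∈ Ioi (0:ℝ), ENNReal.ofReal (t ^ (-(2*ν/(2*ν)))) *
          ∫⁻ l, ENNReal.ofReal (t ^ 2 / (t ^ 2 + l ^ (2*(2*ν)))) ∂μ) ∧
    (⨆ t ∈ Ioi (0:ℝ), ENNReal.ofReal (t ^ (-(2*ν/(2*ν)))) *
        ∫⁻ l, ENNReal.ofReal (t ^ 2 / (t ^ 2 + l ^ (2*(2*ν)))) ∂μ)
      ≤ 2 * (⨆ t ∈ Ioi (0:ℝ), ENNReal.ofReal (t ^ (-(2*ν))) * μ (Ico 0 t)) :=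
  stmt11_general μ hsupp ν hν
end

section
/- Let T : X → Y be a bounded linear operator between Hilbert spaces, y† = Tx†, and for α > 0 let x_α = (T*T + αI)^{-1}(T*y† + αx₀) and x_α^δ = (T*T + αI)^{-1}(T*y^δ + αx₀) with ‖y† - y^δ‖ ≤ δ. Then ‖x† - x_α^δ‖ ≤ ‖x† - x_α‖ + δ/(2√α). -/
/-! Since `x_α - x_α^δ` solves the normal equation with data `y† - y^δ`, pairing that equation
with `e = x_α - x_α^δ` gives `‖T e‖² + α‖e‖² = ⟪y† - y^δ, T e⟫ ≤ δ‖T e‖`. Completing the square in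
`‖T e‖` yields `α‖e‖² ≤ δ²/4`, and the triangle inequality finishes. -/

open ContinuousLinearMap

theorem le_div_two_mul_sqrt_of_sq_add_mul_sq_le {a b α δ : ℝ} (hα : 0 < α) (hb : 0 ≤ b)
    (hδ : 0 ≤ δ) (h : a ^ 2 + α * b ^ 2 ≤ δ * a) : b ≤ δ / (2 * √α) := by
  have hsq : (√α * b) ^ 2 ≤ (δ / 2) ^ 2 := by
    rw [mul_pow, Real.sq_sqrt hα.le]
    nlinarith [sq_nonneg (a - δ / 2)]
  have hroot : √α * b ≤ δ / 2 :=
    (pow_le_pow_iff_left₀ (by positivity) (by positivity) two_ne_zero).mp hsq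
  rw [le_div_iff₀ (by positivity)]
  linarith

section NormalEquation

variable {X Y : Type*} [NormedAddCommGroup X] [InnerProductSpace ℝ X] [CompleteSpace X]
  [NormedAddCommGroup Y] [InnerProductSpace ℝ Y] [CompleteSpace Y]
  {T : X →L[ℝ] Y} {α : ℝ} {e : X} {r : Y}

theorem adjoint_apply_sub_add_smul_sub {x₁ x₂ x₀ : X} {y₁ y₂ : Y}
    (h₁ : adjoint T (T x₁) + α • x₁ = adjoint T y₁ + α • x₀)
    (h₂ : adjoint T (T x₂) + α • x₂ = adjoint T y₂ + α • x₀) :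
    adjoint T (T (x₁ - x₂)) + α • (x₁ - x₂) = adjoint T (y₁ - y₂) := by
  simp only [map_sub, smul_sub]
  linear_combination (norm := module) h₁ - h₂

theorem sq_norm_apply_add_mul_sq_norm_eq_inner
    (he : adjoint T (T e) + α • e = adjoint T r) :
    ‖T e‖ ^ 2 + α * ‖e‖ ^ 2 = inner ℝ r (T e) := by
  have := congrArg (fun z => inner ℝ z e) he
  simpa only [inner_add_left, real_inner_smul_left, adjoint_inner_left,
    real_inner_self_eq_norm_sq] using this

theorem norm_le_div_two_mul_sqrt_of_adjoint_apply_add_smul_eq (hα : 0 < α)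
    (he : adjoint T (T e) + α • e = adjoint T r) :
    ‖e‖ ≤ ‖r‖ / (2 * √α) := by
  refine le_div_two_mul_sqrt_of_sq_add_mul_sq_le (a := ‖T e‖) hα (norm_nonneg e)
    (norm_nonneg r) ?_
  rw [sq_norm_apply_add_mul_sq_norm_eq_inner he]
  exact real_inner_le_norm r (T e)

end NormalEquation

theorem stmt14_general {X Y : Type*}
    [NormedAddCommGroup X] [InnerProductSpace ℝ X] [CompleteSpace X]
    [NormedAddCommGroup Y] [InnerProductSpace ℝ Y] [CompleteSpace Y]
    (T : X →L[ℝ] Y) (x0 xdag : X) (ydag ydel : Y) (δ α : ℝ)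
    (hα : 0 < α)
    (hnoise : ‖ydag - ydel‖ ≤ δ)
    (xα xαδ : X)
    (h1 : (ContinuousLinearMap.adjoint T) (T xα) + α • xα
        = (ContinuousLinearMap.adjoint T) ydag + α • x0)
    (h2 : (ContinuousLinearMap.adjoint T) (T xαδ) + α • xαδ
        = (ContinuousLinearMap.adjoint T) ydel + α • x0) :
    ‖xdag - xαδ‖ ≤ ‖xdag - xα‖ + δ / (2 * Real.sqrt α) := by
  have hdiff : ‖xα - xαδ‖ ≤ δ / (2 * √α) :=
    (norm_le_div_two_mul_sqrt_of_adjoint_apply_add_smul_eq hα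
      (adjoint_apply_sub_add_smul_sub h1 h2)).trans (by gcongr)
  calc ‖xdag - xαδ‖ ≤ ‖xdag - xα‖ + ‖xα - xαδ‖ := norm_sub_le_norm_sub_add_norm_sub _ _ _
    _ ≤ ‖xdag - xα‖ + δ / (2 * √α) := by gcongr

/-- Tikhonov error splitting.  `T : X → Y` bounded between Hilbert spaces,
`y† = T x†`, `‖y† - y^δ‖ ≤ δ`, and `x_α`, `x_α^δ` the Tikhonov regularized
solutions, characterized by the normal equations
`(T*T + αI) x_α = T* y† + α x₀` and `(T*T + αI) x_α^δ = T* y^δ + α x₀`.  Then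
`‖x† - x_α^δ‖ ≤ ‖x† - x_α‖ + δ/(2√α)`. -/
theorem stmt14 {X Y : Type*}
    [NormedAddCommGroup X] [InnerProductSpace ℝ X] [CompleteSpace X]
    [NormedAddCommGroup Y] [InnerProductSpace ℝ Y] [CompleteSpace Y]
    (T : X →L[ℝ] Y) (x0 xdag : X) (ydag ydel : Y) (δ α : ℝ)
    (hα : 0 < α) (hδ : 0 ≤ δ)
    (hy : T xdag = ydag) (hnoise : ‖ydag - ydel‖ ≤ δ)
    (xα xαδ : X)
    (h1 : (ContinuousLinearMap.adjoint T) (T xα) + α • xα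
        = (ContinuousLinearMap.adjoint T) ydag + α • x0)
    (h2 : (ContinuousLinearMap.adjoint T) (T xαδ) + α • xαδ
        = (ContinuousLinearMap.adjoint T) ydel + α • x0) :
    ‖xdag - xαδ‖ ≤ ‖xdag - xα‖ + δ / (2 * Real.sqrt α) :=
  stmt14_general T x0 xdag ydag ydel δ α hα hnoise xα xαδ h1 h2
end

section
/- Let T : X → Y be bounded injective between Hilbert spaces, Tx† = y†, and x_α = (T*T+αI)^{-1}(T*y† + αx₀) the Tikhonov regularized solution. Then for 0 ≤ ν ≤ 1, N_ν^{-1} ‖x†-x₀‖_{ν:1} ≤ sup_{α>0} α^{-ν} ‖x† - x_α‖ ≤ ‖x†-x₀‖_{ν:1}, where ‖z‖_{ν:1}² = sup_{t>0} t^{-2ν} ∫ t²/(t²+λ²) dμ_z(λ) with μ_z the spectral measure of T*T applied to z. -/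
/-!
With `μ` the spectral measure of `x† - x₀`, both sides are suprema of integrals against `μ`,
and everything reduces to pointwise inequalities on `λ ≥ 0`. The upper bound is
`(α + λ)² ≥ α² + λ²`. For the lower bound take `α = s t`: Cauchy–Schwarz gives
`(s t + λ)² ≤ (1 + s²)(t² + λ²)`, so the Tikhonov integrand at `α` dominates
`σ^(1-ν) / (1 + σ)` (with `σ = s²`) times the interpolation integrand at `t`, and
`sup_{σ > 0} σ^(1-ν) / (1 + σ) = ν^ν (1-ν)^(1-ν)`, attained at `σ = (1 - ν) / ν`.
-/

open MeasureTheory Set Filter Topology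
open scoped ENNReal

lemma sq_div_add_le_sq_div_sq_add_sq {α l : ℝ} (hα : 0 < α) (hl : 0 ≤ l) :
    (α / (α + l)) ^ 2 ≤ α ^ 2 / (α ^ 2 + l ^ 2) := by
  rw [div_pow]
  exact div_le_div_of_nonneg_left (sq_nonneg α) (by positivity)
    (by nlinarith [mul_nonneg hα.le hl])

lemma sq_div_one_add_sq_mul_le {s t l : ℝ} (hs : 0 < s) (ht : 0 < t) (hl : 0 ≤ l) :
    s ^ 2 / (1 + s ^ 2) * (t ^ 2 / (t ^ 2 + l ^ 2)) ≤ (s * t / (s * t + l)) ^ 2 := by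
  have cauchy_schwarz : (s * t + l) ^ 2 ≤ (1 + s ^ 2) * (t ^ 2 + l ^ 2) := by
    nlinarith [sq_nonneg (t - s * l)]
  rw [div_mul_div_comm, div_pow, mul_pow]
  exact div_le_div_of_nonneg_left (by positivity) (by positivity) cauchy_schwarz

lemma sq_rpow_div_one_add_sq_mul_le {ν s t l : ℝ} (hs : 0 < s) (ht : 0 < t) (hl : 0 ≤ l) :
    (s ^ 2) ^ (1 - ν) / (1 + s ^ 2) * (t ^ (-(2 * ν)) * (t ^ 2 / (t ^ 2 + l ^ 2)))
      ≤ (s * t) ^ (-(2 * ν)) * (s * t / (s * t + l)) ^ 2 := by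
  have hpow : (s ^ 2) ^ (1 - ν) = s ^ (-(2 * ν)) * s ^ 2 := by
    rw [← Real.rpow_natCast, ← Real.rpow_mul hs.le, ← Real.rpow_add hs]
    push_cast; ring_nf
  calc _ = s ^ (-(2 * ν)) * t ^ (-(2 * ν)) *
        (s ^ 2 / (1 + s ^ 2) * (t ^ 2 / (t ^ 2 + l ^ 2))) := by
        rw [hpow]; ring
    _ ≤ s ^ (-(2 * ν)) * t ^ (-(2 * ν)) * (s * t / (s * t + l)) ^ 2 := by
        gcongr; exact sq_div_one_add_sq_mul_le hs ht hl
    _ = _ := by rw [Real.mul_rpow hs.le ht.le]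

lemma ofReal_mul_lintegral_mono {β : Type*} [MeasurableSpace β] {μ : Measure β} {a b : ℝ}
    {f g : β → ℝ} (ha : 0 ≤ a) (hb : 0 ≤ b) (h : ∀ᵐ x ∂μ, a * f x ≤ b * g x) :
    ENNReal.ofReal a * ∫⁻ x, ENNReal.ofReal (f x) ∂μ
      ≤ ENNReal.ofReal b * ∫⁻ x, ENNReal.ofReal (g x) ∂μ := by
  simp_rw [← lintegral_const_mul' _ _ ENNReal.ofReal_ne_top, ← ENNReal.ofReal_mul ha,
    ← ENNReal.ofReal_mul hb]
  exact lintegral_mono_ae (h.mono fun x hx => ENNReal.ofReal_le_ofReal hx)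

lemma ofReal_rpow_mul_rpow_le_iSup {ν : ℝ} (h0 : 0 ≤ ν) (h1 : ν ≤ 1) :
    ENNReal.ofReal (ν ^ ν * (1 - ν) ^ (1 - ν))
      ≤ ⨆ σ ∈ Ioi (0:ℝ), ENNReal.ofReal (σ ^ (1 - ν) / (1 + σ)) := by
  have le_iSup_of_tendsto {l : Filter ℝ} [l.NeBot] {c : ℝ} (hl : ∀ᶠ σ in l, 0 < σ)
      (h : Tendsto (fun σ => σ ^ (1 - ν) / (1 + σ)) l (𝓝 c)) :
      ENNReal.ofReal c ≤ ⨆ σ ∈ Ioi (0:ℝ), ENNReal.ofReal (σ ^ (1 - ν) / (1 + σ)) :=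
    le_of_tendsto (ENNReal.tendsto_ofReal h) (hl.mono fun σ hσ => le_iSup₂_of_le σ hσ le_rfl)
  rcases h0.eq_or_lt with rfl | h0
  · have h : Tendsto (fun σ : ℝ => (σ⁻¹ + 1)⁻¹) atTop (𝓝 (0 + 1)⁻¹) :=
      (tendsto_inv_atTop_zero.add_const 1).inv₀ (by norm_num)
    refine le_iSup_of_tendsto (eventually_gt_atTop 0) (h.congr' ?_) |>.trans_eq' (by norm_num)
    filter_upwards [eventually_gt_atTop 0] with σ hσ
    rw [sub_zero, Real.rpow_one]
    field_simp
  rcases h1.eq_or_lt with rfl | h1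
  · have h : Tendsto (fun σ : ℝ => (1 + σ)⁻¹) (𝓝[>] 0) (𝓝 (1 + 0)⁻¹) :=
      ((tendsto_nhdsWithin_of_tendsto_nhds tendsto_id).const_add 1).inv₀ (by norm_num)
    refine le_iSup_of_tendsto (l := 𝓝[>] 0) self_mem_nhdsWithin (h.congr fun σ => ?_)
      |>.trans_eq' (by norm_num)
    simp only [sub_self, Real.rpow_zero, one_div]
  · have h1ν : 0 < 1 - ν := by linarith
    refine le_iSup₂_of_le ((1 - ν) / ν) (div_pos h1ν h0) (le_of_eq (congrArg _ ?_))
    have hν : ν ^ ν * ν ^ (1 - ν) = ν := by rw [← Real.rpow_add h0]; norm_num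
    rw [Real.div_rpow h1ν.le h0.le, show 1 + (1 - ν) / ν = 1 / ν by field_simp; ring]
    field_simp
    linear_combination hν

/-- `‖z‖_{ν:1}²` for the spectral measure `μ = μ_z`. -/
noncomputable def interpNormSq (μ : Measure ℝ) (ν : ℝ) : ℝ≥0∞ :=
  ⨆ t ∈ Ioi (0:ℝ), ENNReal.ofReal (t ^ (-(2 * ν))) *
    ∫⁻ l, ENNReal.ofReal (t ^ 2 / (t ^ 2 + l ^ 2)) ∂μ

/-- `sup_{α > 0} α^(-2ν) ‖x† - x_α‖²`, for the spectral measure `μ = μ_{x†-x₀}`. -/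
noncomputable def tikhonovRate (μ : Measure ℝ) (ν : ℝ) : ℝ≥0∞ :=
  ⨆ α ∈ Ioi (0:ℝ), ENNReal.ofReal (α ^ (-(2 * ν))) *
    ∫⁻ l, ENNReal.ofReal ((α / (α + l)) ^ 2) ∂μ

section SpectralRates

variable {μ : Measure ℝ} (hμ : ∀ᵐ l ∂μ, 0 ≤ l) {ν : ℝ}
include hμ

lemma tikhonovRate_le_interpNormSq : tikhonovRate μ ν ≤ interpNormSq μ ν :=
  iSup₂_mono fun _ hα => ofReal_mul_lintegral_mono (Real.rpow_nonneg hα.le _)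
    (Real.rpow_nonneg hα.le _) (hμ.mono fun _ hl =>
      mul_le_mul_of_nonneg_left (sq_div_add_le_sq_div_sq_add_sq hα hl) (Real.rpow_nonneg hα.le _))

lemma ofReal_mul_interpNormSq_le_tikhonovRate (h0 : 0 ≤ ν) (h1 : ν ≤ 1) :
    ENNReal.ofReal (ν ^ ν * (1 - ν) ^ (1 - ν)) * interpNormSq μ ν ≤ tikhonovRate μ ν := by
  grw [ofReal_rpow_mul_rpow_le_iSup h0 h1]
  simp_rw [interpNormSq, ENNReal.iSup_mul, ENNReal.mul_iSup]
  refine iSup₂_le fun σ (hσ : 0 < σ) => iSup₂_le fun t (ht : 0 < t) => ?_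
  have hs : 0 < √σ := Real.sqrt_pos.2 hσ
  refine le_iSup₂_of_le (√σ * t) (mul_pos hs ht) ?_
  rw [← mul_assoc, ← ENNReal.ofReal_mul (by positivity)]
  refine ofReal_mul_lintegral_mono (by positivity) (by positivity) (hμ.mono fun l hl => ?_)
  simpa only [Real.sq_sqrt hσ.le, mul_assoc] using sq_rpow_div_one_add_sq_mul_le (ν := ν) hs ht hl

end SpectralRates

theorem stmt15_general {X : Type*}
    [NormedAddCommGroup X]
    (xdag : X)
    (xα : ℝ → X)
    (μ : Measure ℝ) (hsupp : μ (Iio 0) = 0)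
    (hrep : ∀ α : ℝ, 0 < α →
      ENNReal.ofReal (‖xdag - xα α‖ ^ 2) = ∫⁻ l, ENNReal.ofReal ((α/(α+l)) ^ 2) ∂μ)
    (ν : ℝ) (h0 : 0 ≤ ν) (h1 : ν ≤ 1) :
    ENNReal.ofReal (ν ^ ν * (1 - ν) ^ (1 - ν)) *
      (⨆ t ∈ Ioi (0:ℝ), ENNReal.ofReal (t ^ (-(2*ν))) *
        ∫⁻ l, ENNReal.ofReal (t ^ 2 / (t ^ 2 + l ^ 2)) ∂μ)
      ≤ (⨆ α ∈ Ioi (0:ℝ), ENNReal.ofReal (α ^ (-(2*ν)) * ‖xdag - xα α‖ ^ 2)) ∧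
    (⨆ α ∈ Ioi (0:ℝ), ENNReal.ofReal (α ^ (-(2*ν)) * ‖xdag - xα α‖ ^ 2))
      ≤ ⨆ t ∈ Ioi (0:ℝ), ENNReal.ofReal (t ^ (-(2*ν))) *
          ∫⁻ l, ENNReal.ofReal (t ^ 2 / (t ^ 2 + l ^ 2)) ∂μ := by
  have hμ : ∀ᵐ l ∂μ, 0 ≤ l := ae_iff.2 (by simp only [not_le]; exact hsupp)
  have hrate : ⨆ α ∈ Ioi (0:ℝ), ENNReal.ofReal (α ^ (-(2*ν)) * ‖xdag - xα α‖ ^ 2)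
      = tikhonovRate μ ν :=
    iSup_congr fun α => iSup_congr fun hα => by
      rw [ENNReal.ofReal_mul (Real.rpow_nonneg (le_of_lt hα) _), hrep α hα]
  rw [hrate]
  exact ⟨ofReal_mul_interpNormSq_le_tikhonovRate hμ h0 h1, tikhonovRate_le_interpNormSq hμ⟩

/-- Tikhonov rate characterization (squared form):
`N_ν⁻¹ ‖x†-x₀‖_{ν:1} ≤ sup_{α>0} α^(-ν) ‖x†-x_α‖ ≤ ‖x†-x₀‖_{ν:1}` for `0 ≤ ν ≤ 1`.
`T` is bounded injective between Hilbert spaces, `T x† = y†`, and `x_α` solves the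
normal equation `(T*T+αI) x_α = T* y† + α x₀`.  The spectral measure
`μ = μ_{x†-x₀}` of `T*T` satisfies `‖x†-x_α‖² = ∫ (α/(α+λ))² dμ(λ)` (hypothesis
`hrep`), and `‖x†-x₀‖_{ν:1}² = sup_{t>0} t^(-2ν) ∫ t²/(t²+λ²) dμ(λ)`;
`N_ν⁻² = ν^ν (1-ν)^(1-ν)`. -/
theorem stmt15 {X Y : Type*}
    [NormedAddCommGroup X] [InnerProductSpace ℝ X] [CompleteSpace X]
    [NormedAddCommGroup Y] [InnerProductSpace ℝ Y] [CompleteSpace Y]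
    (T : X →L[ℝ] Y) (hT : Function.Injective T)
    (xdag x0 : X) (ydag : Y) (hy : T xdag = ydag)
    (xα : ℝ → X)
    (hxα : ∀ α : ℝ, 0 < α →
      (ContinuousLinearMap.adjoint T) (T (xα α)) + α • (xα α)
        = (ContinuousLinearMap.adjoint T) ydag + α • x0)
    (μ : Measure ℝ) [IsFiniteMeasure μ] (hsupp : μ (Iio 0) = 0)
    (hrep : ∀ α : ℝ, 0 < α →
      ENNReal.ofReal (‖xdag - xα α‖ ^ 2) = ∫⁻ l, ENNReal.ofReal ((α/(α+l)) ^ 2) ∂μ)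
    (ν : ℝ) (h0 : 0 ≤ ν) (h1 : ν ≤ 1) :
    ENNReal.ofReal (ν ^ ν * (1 - ν) ^ (1 - ν)) *
      (⨆ t ∈ Ioi (0:ℝ), ENNReal.ofReal (t ^ (-(2*ν))) *
        ∫⁻ l, ENNReal.ofReal (t ^ 2 / (t ^ 2 + l ^ 2)) ∂μ)
      ≤ (⨆ α ∈ Ioi (0:ℝ), ENNReal.ofReal (α ^ (-(2*ν)) * ‖xdag - xα α‖ ^ 2)) ∧
    (⨆ α ∈ Ioi (0:ℝ), ENNReal.ofReal (α ^ (-(2*ν)) * ‖xdag - xα α‖ ^ 2))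
      ≤ ⨆ t ∈ Ioi (0:ℝ), ENNReal.ofReal (t ^ (-(2*ν))) *
          ∫⁻ l, ENNReal.ofReal (t ^ 2 / (t ^ 2 + l ^ 2)) ∂μ :=
  stmt15_general xdag xα μ hsupp hrep ν h0 h1
end

section
/- Let T : X → Y be bounded injective between Hilbert spaces, Tx† = y†, k ≥ 1 an integer, and x_{α,k} the k-fold iterated Tikhonov regularization (x_{α,0}=x₀, each x_{α,j} minimizes ‖y†-Tx‖² + α‖x - x_{α,j-1}‖²), so that x† - x_{α,k} = (α(T*T+αI)^{-1})^k (x†-x₀). Then for real 0 ≤ ν ≤ k: N_{ν/k}^{1-2k} ‖x†-x₀‖_{ν:k} ≤ sup_{α>0} α^{-ν}‖x† - x_{α,k}‖ ≤ ‖x†-x₀‖_{ν:k}. -/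
/-!
Both sides are suprema of integrals against the spectral measure, with integrands
`α^(-2ν) (α/(α+λ))^(2k)` and, after substituting `t = s^k`, `s^(-2ν) s^(2k)/(s^(2k)+λ^(2k))`.
The upper bound is `α^(2k) + λ^(2k) ≤ (α+λ)^(2k)` at `s = α`. For the lower bound, with
`θ = ν/k ∈ (0,1)`, the convexity of `x ↦ x^(2k)` with weights `1-θ, θ` gives
`(cs+λ)^(2k) ≤ (1-θ)^(1-2k) (cs)^(2k) + θ^(1-2k) λ^(2k)`, and for the right `c` this is the
pointwise inequality at `α = cs` with constant `(θ^θ (1-θ)^(1-θ))^(2k-1)`. The endpoints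
`θ = 0, 1` follow by letting `α → ∞`, resp. `α → 0`, under Fatou's lemma.
-/

open MeasureTheory Set Filter Topology

open scoped ENNReal

theorem biSup_Ioi_pow_eq {β : Type*} [CompleteLattice β] {k : ℕ} (hk : k ≠ 0) (F : ℝ → β) :
    ⨆ s ∈ Ioi (0:ℝ), F (s ^ k) = ⨆ t ∈ Ioi (0:ℝ), F t :=
  le_antisymm (iSup₂_le fun s hs => le_biSup (F ·) (mem_Ioi.2 (pow_pos hs k)))
    (iSup₂_le fun t ht => le_iSup₂_of_le (t ^ (k⁻¹ : ℝ)) (Real.rpow_pos_of_pos ht _)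
      (by rw [Real.rpow_inv_natCast_pow (le_of_lt ht) hk]))

theorem ENNReal.ofReal_mul_lintegral_ofReal {α : Type*} [MeasurableSpace α] {μ : Measure α}
    {c : ℝ} (hc : 0 ≤ c) (f : α → ℝ) :
    ENNReal.ofReal c * ∫⁻ x, ENNReal.ofReal (f x) ∂μ = ∫⁻ x, ENNReal.ofReal (c * f x) ∂μ := by
  rw [← lintegral_const_mul' _ _ ENNReal.ofReal_ne_top]
  simp_rw [ENNReal.ofReal_mul hc]

theorem lintegral_le_biSup_of_eventually_le {α ι : Type*} [MeasurableSpace α] {μ : Measure α}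
    {u : Filter ι} [u.IsCountablyGenerated] [u.NeBot] {s : Set ι} (hs : ∀ᶠ i in u, i ∈ s)
    {f : ι → α → ℝ≥0∞} (hf : ∀ i, Measurable (f i)) {g : α → ℝ≥0∞}
    (h : ∀ᵐ x ∂μ, ∀ᶠ i in u, g x ≤ f i x) :
    ∫⁻ x, g x ∂μ ≤ ⨆ i ∈ s, ∫⁻ x, f i x ∂μ :=
  calc ∫⁻ x, g x ∂μ ≤ ∫⁻ x, liminf (fun i => f i x) u ∂μ :=
        lintegral_mono_ae (h.mono fun _ hx => le_liminf_of_le (by isBoundedDefault) hx)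
    _ ≤ liminf (fun i => ∫⁻ x, f i x ∂μ) u := lintegral_liminf_le hf
    _ ≤ ⨆ i ∈ s, ∫⁻ x, f i x ∂μ :=
        liminf_le_of_frequently_le'
          (hs.mono fun _ hi => le_biSup (fun i => ∫⁻ x, f i x ∂μ) hi).frequently

theorem add_pow_le_mul_div_pow_add_mul_div_pow (p : ℕ) {a b β γ : ℝ} (ha : 0 ≤ a) (hb : 0 ≤ b)
    (hβ : 0 < β) (hγ : 0 < γ) (hβγ : β + γ = 1) :
    (a + b) ^ p ≤ β * (a / β) ^ p + γ * (b / γ) ^ p := by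
  have h := (convexOn_pow p).2 (mem_Ici.2 (div_nonneg ha hβ.le)) (mem_Ici.2 (div_nonneg hb hγ.le))
    hβ.le hγ.le hβγ
  simpa only [smul_eq_mul, mul_div_cancel₀ _ hβ.ne', mul_div_cancel₀ _ hγ.ne'] using h

noncomputable def residualDensity (p : ℕ) (θ α l : ℝ) : ℝ :=
  α ^ (-(θ * p)) * (α ^ p / (α + l) ^ p)

noncomputable def sourceDensity (p : ℕ) (θ s l : ℝ) : ℝ :=
  s ^ (-(θ * p)) * (s ^ p / (s ^ p + l ^ p))

section Densities

variable {p : ℕ} {θ : ℝ}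

@[fun_prop]
theorem measurable_residualDensity (α : ℝ) : Measurable (residualDensity p θ α) := by
  unfold residualDensity
  fun_prop

theorem residualDensity_le_sourceDensity (hp : p ≠ 0) {α l : ℝ} (hα : 0 < α) (hl : 0 ≤ l) :
    residualDensity p θ α l ≤ sourceDensity p θ α l := by
  unfold residualDensity sourceDensity
  gcongr
  exact pow_add_pow_le hα.le hl hp

theorem eventually_sourceDensity_zero_le_atTop {s l : ℝ} (hs : 0 < s) (hl : 0 ≤ l) :
    ∀ᶠ α in atTop, sourceDensity p 0 s l ≤ residualDensity p 0 α l := by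
  simp only [sourceDensity, residualDensity, zero_mul, neg_zero, Real.rpow_zero, one_mul]
  rcases hl.eq_or_lt with rfl | hl
  · filter_upwards [eventually_gt_atTop 0] with α hα
    rw [add_zero, div_self (pow_ne_zero p hα.ne')]
    exact div_le_one_of_le₀ (le_add_of_nonneg_right (pow_nonneg le_rfl p)) (by positivity)
  · have hlt : s ^ p / (s ^ p + l ^ p) < 1 :=
      (div_lt_one (by positivity)).2 (lt_add_of_pos_right _ (pow_pos hl p))
    have hlim : Tendsto (fun α => α / (α + l)) atTop (𝓝 1) := by
      have h := tendsto_const_nhds (x := (1:ℝ)).sub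
        (tendsto_const_nhds (x := l).div_atTop (tendsto_atTop_add_const_right _ l tendsto_id))
      rw [sub_zero] at h
      refine h.congr' ?_
      filter_upwards [eventually_gt_atTop 0] with α hα
      simp only [id]
      field_simp
      ring
    filter_upwards [(hlim.pow p).eventually (lt_mem_nhds (by rwa [one_pow]))] with α hα
    rw [← div_pow]
    exact hα.le

theorem eventually_sourceDensity_one_le_nhdsGT {s l : ℝ} (hs : 0 < s) (hl : 0 ≤ l) :
    ∀ᶠ α in 𝓝[>] 0, sourceDensity p 1 s l ≤ residualDensity p 1 α l := by
  have hinv : ∀ x y : ℝ, 0 < x → x ^ (-(1 * (p:ℝ))) * (x ^ p / y) = y⁻¹ := fun x y hx => by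
    rw [one_mul, Real.rpow_neg hx.le, Real.rpow_natCast, ← mul_div_assoc,
      inv_mul_cancel₀ (pow_ne_zero p hx.ne'), one_div]
  have hlim : Tendsto (fun α => (α + l) ^ p) (𝓝[>] 0) (𝓝 (l ^ p)) := by
    have h : Continuous fun α : ℝ => (α + l) ^ p := by fun_prop
    simpa using (h.tendsto 0).mono_left nhdsWithin_le_nhds
  filter_upwards [self_mem_nhdsWithin,
    hlim.eventually (gt_mem_nhds (lt_add_of_pos_left _ (pow_pos hs p)))] with α hα hlt
  rw [sourceDensity, residualDensity, hinv s _ hs, hinv α _ hα]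
  exact inv_anti₀ (pow_pos (add_pos_of_pos_of_nonneg hα hl) p) hlt.le

theorem exists_mul_sourceDensity_le_residualDensity (hp : p ≠ 0) (hθ0 : 0 < θ) (hθ1 : θ < 1) :
    ∃ c > 0, ∀ s l : ℝ, 0 < s → 0 ≤ l →
      (θ ^ θ * (1 - θ) ^ (1 - θ)) ^ ((p:ℝ) - 1) * sourceDensity p θ s l
        ≤ residualDensity p θ (c * s) l := by
  set D := (θ ^ θ * (1 - θ) ^ (1 - θ)) ^ ((p:ℝ) - 1)
  set c := ((1 - θ) / θ) ^ (((p:ℝ) - 1) / p)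
  have h1θ : 0 < 1 - θ := sub_pos.2 hθ1
  have hc : 0 < c := by positivity
  have hD : 0 < D := by positivity
  have hlogc : Real.log c = ((p:ℝ) - 1) / p * (Real.log (1 - θ) - Real.log θ) := by
    rw [Real.log_rpow (div_pos h1θ hθ0), Real.log_div h1θ.ne' hθ0.ne']
  have hlogD : Real.log D = ((p:ℝ) - 1) * (θ * Real.log θ + (1 - θ) * Real.log (1 - θ)) := by
    rw [Real.log_rpow (by positivity), Real.log_mul (by positivity) (by positivity),
      Real.log_rpow hθ0, Real.log_rpow h1θ]
  -- `c` is chosen so that the weights `(1-θ)^(1-p)` and `θ^(1-p)` of the convexity bound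
  -- below, multiplied by `D`, become the coefficients of `residualDensity p θ (c * s)`.
  have hwt₁ : D * (1 - θ) / (1 - θ) ^ p = c ^ (-(θ * p)) := by
    refine Real.log_injOn_pos (mem_Ioi.2 (by positivity)) (mem_Ioi.2 (by positivity)) ?_
    rw [Real.log_div (by positivity) (by positivity), Real.log_mul hD.ne' h1θ.ne',
      Real.log_pow, Real.log_rpow hc, hlogc, hlogD]
    field_simp
    ring
  have hwt₂ : D * θ / θ ^ p = c ^ (-(θ * p)) * c ^ p := by
    refine Real.log_injOn_pos (mem_Ioi.2 (by positivity)) (mem_Ioi.2 (by positivity)) ?_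
    rw [Real.log_div (by positivity) (by positivity), Real.log_mul hD.ne' hθ0.ne',
      Real.log_mul (by positivity) (by positivity), Real.log_pow, Real.log_pow,
      Real.log_rpow hc, hlogc, hlogD]
    field_simp
    ring
  refine ⟨c, hc, fun s l hs hl => ?_⟩
  have hcore : D * (c * s + l) ^ p ≤ c ^ (-(θ * p)) * c ^ p * (s ^ p + l ^ p) :=
    calc D * (c * s + l) ^ p ≤ D * ((1 - θ) * (c * s / (1 - θ)) ^ p + θ * (l / θ) ^ p) := by
          gcongr
          exact add_pow_le_mul_div_pow_add_mul_div_pow p (by positivity) hl h1θ hθ0 (by ring)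
      _ = D * (1 - θ) / (1 - θ) ^ p * c ^ p * s ^ p + D * θ / θ ^ p * l ^ p := by
          rw [div_pow, div_pow, mul_pow]
          ring
      _ = c ^ (-(θ * p)) * c ^ p * (s ^ p + l ^ p) := by
          rw [hwt₁, hwt₂]
          ring
  unfold sourceDensity residualDensity
  rw [Real.mul_rpow hc.le hs.le, mul_pow]
  calc D * (s ^ (-(θ * p)) * (s ^ p / (s ^ p + l ^ p)))
      = s ^ (-(θ * p)) * s ^ p * (D / (s ^ p + l ^ p)) := by ring
    _ ≤ s ^ (-(θ * p)) * s ^ p * (c ^ (-(θ * p)) * c ^ p / (c * s + l) ^ p) := by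
        refine mul_le_mul_of_nonneg_left ?_ (by positivity)
        rw [div_le_div_iff₀ (by positivity) (by positivity)]
        exact hcore
    _ = c ^ (-(θ * p)) * s ^ (-(θ * p)) * (c ^ p * s ^ p / (c * s + l) ^ p) := by ring

theorem lintegral_mul_sourceDensity_le_biSup {μ : Measure ℝ} (hμ : ∀ᵐ l ∂μ, 0 ≤ l)
    (hp : p ≠ 0) (hθ0 : 0 ≤ θ) (hθ1 : θ ≤ 1) {s : ℝ} (hs : 0 < s) :
    ∫⁻ l, ENNReal.ofReal ((θ ^ θ * (1 - θ) ^ (1 - θ)) ^ ((p:ℝ) - 1) * sourceDensity p θ s l) ∂μ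
      ≤ ⨆ α ∈ Ioi (0:ℝ), ∫⁻ l, ENNReal.ofReal (residualDensity p θ α l) ∂μ := by
  have hmeas (α : ℝ) : Measurable fun l => ENNReal.ofReal (residualDensity p θ α l) := by
    fun_prop
  rcases hθ0.eq_or_lt with rfl | hθ0
  · simp only [sub_zero, Real.rpow_zero, Real.one_rpow, one_mul]
    exact lintegral_le_biSup_of_eventually_le (eventually_gt_atTop 0) hmeas (hμ.mono fun l hl =>
      (eventually_sourceDensity_zero_le_atTop hs hl).mono fun _ h => ENNReal.ofReal_le_ofReal h)
  rcases hθ1.eq_or_lt with rfl | hθ1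
  · simp only [sub_self, Real.rpow_zero, Real.one_rpow, mul_one, one_mul]
    exact lintegral_le_biSup_of_eventually_le (u := 𝓝[>] 0) self_mem_nhdsWithin hmeas
      (hμ.mono fun l hl => (eventually_sourceDensity_one_le_nhdsGT hs hl).mono fun _ h =>
        ENNReal.ofReal_le_ofReal h)
  obtain ⟨c, hc, hle⟩ := exists_mul_sourceDensity_le_residualDensity hp hθ0 hθ1
  exact le_iSup₂_of_le (c * s) (mul_pos hc hs)
    (lintegral_mono_ae (hμ.mono fun l hl => ENNReal.ofReal_le_ofReal (hle s l hs hl)))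

end Densities

section Conversion

variable {μ : Measure ℝ} {k : ℕ}

theorem div_natCast_mul_two_mul (hk : k ≠ 0) (ν : ℝ) : ν / k * ((2 * k : ℕ) : ℝ) = 2 * ν := by
  push_cast
  field_simp [Nat.cast_ne_zero.2 hk]

theorem rpow_two_mul_natCast (x : ℝ) : x ^ (2 * (k:ℝ)) = x ^ (2 * k) := by
  exact_mod_cast Real.rpow_natCast x (2 * k)

theorem lintegral_ofReal_residualDensity (hk : k ≠ 0) (ν : ℝ) {α : ℝ} (hα : 0 < α) :
    ∫⁻ l, ENNReal.ofReal (residualDensity (2 * k) (ν / k) α l) ∂μ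
      = ENNReal.ofReal (α ^ (-(2 * ν))) *
        ∫⁻ l, ENNReal.ofReal ((α / (α + l)) ^ (2 * (k:ℝ))) ∂μ := by
  rw [ENNReal.ofReal_mul_lintegral_ofReal (by positivity)]
  simp_rw [residualDensity, div_natCast_mul_two_mul hk, rpow_two_mul_natCast, div_pow]

theorem lintegral_ofReal_sourceDensity (hk : k ≠ 0) (ν : ℝ) {s : ℝ} (hs : 0 < s) :
    ∫⁻ l, ENNReal.ofReal (sourceDensity (2 * k) (ν / k) s l) ∂μ
      = ENNReal.ofReal ((s ^ k) ^ (-(2 * ν / k))) *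
        ∫⁻ l, ENNReal.ofReal ((s ^ k) ^ 2 / ((s ^ k) ^ 2 + l ^ (2 * (k:ℝ)))) ∂μ := by
  have hsk : (s ^ k) ^ (-(2 * ν / k)) = s ^ (-(ν / k * ((2 * k : ℕ) : ℝ))) := by
    rw [← Real.rpow_natCast, ← Real.rpow_mul hs.le, div_natCast_mul_two_mul hk]
    field_simp [Nat.cast_ne_zero.2 hk]
  rw [ENNReal.ofReal_mul_lintegral_ofReal (by positivity)]
  simp_rw [sourceDensity, hsk, rpow_two_mul_natCast, ← pow_mul, mul_comm k 2]

end Conversion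

theorem stmt16_general {X : Type*}
    [NormedAddCommGroup X]
    (xdag : X)
    (k : ℕ) (hk : 1 ≤ k) (xαk : ℝ → X)
    (μ : Measure ℝ) (hsupp : μ (Iio 0) = 0)
    (hrep : ∀ α : ℝ, 0 < α →
      ENNReal.ofReal (‖xdag - xαk α‖ ^ 2)
        = ∫⁻ l, ENNReal.ofReal ((α/(α+l)) ^ (2*(k:ℝ))) ∂μ)
    (ν : ℝ) (h0 : 0 ≤ ν) (h1 : ν ≤ (k:ℝ)) :
    ENNReal.ofReal
        (((ν/(k:ℝ)) ^ (ν/(k:ℝ)) * (1 - ν/(k:ℝ)) ^ (1 - ν/(k:ℝ))) ^ (2*(k:ℝ) - 1)) *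
      (⨆ t ∈ Ioi (0:ℝ), ENNReal.ofReal (t ^ (-(2*ν/(k:ℝ)))) *
        ∫⁻ l, ENNReal.ofReal (t ^ 2 / (t ^ 2 + l ^ (2*(k:ℝ)))) ∂μ)
      ≤ (⨆ α ∈ Ioi (0:ℝ), ENNReal.ofReal (α ^ (-(2*ν)) * ‖xdag - xαk α‖ ^ 2)) ∧
    (⨆ α ∈ Ioi (0:ℝ), ENNReal.ofReal (α ^ (-(2*ν)) * ‖xdag - xαk α‖ ^ 2))
      ≤ ⨆ t ∈ Ioi (0:ℝ), ENNReal.ofReal (t ^ (-(2*ν/(k:ℝ)))) *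
          ∫⁻ l, ENNReal.ofReal (t ^ 2 / (t ^ 2 + l ^ (2*(k:ℝ)))) ∂μ := by
  have hk₀ : k ≠ 0 := Nat.one_le_iff_ne_zero.1 hk
  have hμ : ∀ᵐ l ∂μ, 0 ≤ l := by
    rw [ae_iff]
    simp only [not_le]
    exact hsupp
  have hθ0 : 0 ≤ ν / k := by positivity
  have hθ1 : ν / k ≤ 1 := div_le_one_of_le₀ h1 k.cast_nonneg
  have hres : ⨆ α ∈ Ioi (0:ℝ), ENNReal.ofReal (α ^ (-(2*ν)) * ‖xdag - xαk α‖ ^ 2)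
      = ⨆ α ∈ Ioi (0:ℝ), ∫⁻ l, ENNReal.ofReal (residualDensity (2 * k) (ν / k) α l) ∂μ :=
    biSup_congr fun α (hα : 0 < α) => by
      rw [ENNReal.ofReal_mul (by positivity), hrep α hα, lintegral_ofReal_residualDensity hk₀ ν hα]
  have hsrc : ⨆ t ∈ Ioi (0:ℝ), ENNReal.ofReal (t ^ (-(2*ν/(k:ℝ)))) *
        ∫⁻ l, ENNReal.ofReal (t ^ 2 / (t ^ 2 + l ^ (2*(k:ℝ)))) ∂μ
      = ⨆ s ∈ Ioi (0:ℝ), ∫⁻ l, ENNReal.ofReal (sourceDensity (2 * k) (ν / k) s l) ∂μ := by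
    rw [← biSup_Ioi_pow_eq hk₀]
    exact biSup_congr fun s (hs : 0 < s) => (lintegral_ofReal_sourceDensity hk₀ ν hs).symm
  have hD : 2 * (k:ℝ) - 1 = ((2 * k : ℕ) : ℝ) - 1 := by push_cast; ring
  rw [hres, hsrc, hD]
  simp_rw [ENNReal.mul_iSup]
  refine ⟨iSup₂_le fun s hs => ?_, iSup₂_mono fun α hα => lintegral_mono_ae (hμ.mono fun l hl =>
    ENNReal.ofReal_le_ofReal (residualDensity_le_sourceDensity (by omega) hα hl))⟩
  rw [ENNReal.ofReal_mul_lintegral_ofReal (by have := sub_nonneg.2 hθ1; positivity)]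
  exact lintegral_mul_sourceDensity_le_biSup hμ (by omega) hθ0 hθ1 hs

/-- Iterated Tikhonov rate characterization (squared form): for integer `k ≥ 1` and
real `0 ≤ ν ≤ k`,
`N_{ν/k}^(1-2k) ‖x†-x₀‖_{ν:k} ≤ sup_{α>0} α^(-ν) ‖x†-x_{α,k}‖ ≤ ‖x†-x₀‖_{ν:k}`.
The iterated Tikhonov error satisfies `‖x†-x_{α,k}‖² = ∫ (α/(α+λ))^(2k) dμ(λ)` with
`μ = μ_{x†-x₀}` the spectral measure of `T*T` (hypothesis `hrep`), and
`‖·‖_{ν:k}² = sup_{t>0} t^(-2ν/k) ∫ t²/(t²+λ^(2k)) dμ(λ)`;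
`N_θ⁻² = θ^θ (1-θ)^(1-θ)`, so `(N_{ν/k}^(1-2k))² = (θ^θ(1-θ)^(1-θ))^(2k-1)` with
`θ = ν/k`. -/
theorem stmt16 {X Y : Type*}
    [NormedAddCommGroup X] [InnerProductSpace ℝ X] [CompleteSpace X]
    [NormedAddCommGroup Y] [InnerProductSpace ℝ Y] [CompleteSpace Y]
    (T : X →L[ℝ] Y) (hT : Function.Injective T)
    (xdag x0 : X) (ydag : Y) (hy : T xdag = ydag)
    (k : ℕ) (hk : 1 ≤ k) (xαk : ℝ → X)
    (μ : Measure ℝ) [IsFiniteMeasure μ] (hsupp : μ (Iio 0) = 0)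
    (hrep : ∀ α : ℝ, 0 < α →
      ENNReal.ofReal (‖xdag - xαk α‖ ^ 2)
        = ∫⁻ l, ENNReal.ofReal ((α/(α+l)) ^ (2*(k:ℝ))) ∂μ)
    (ν : ℝ) (h0 : 0 ≤ ν) (h1 : ν ≤ (k:ℝ)) :
    ENNReal.ofReal
        (((ν/(k:ℝ)) ^ (ν/(k:ℝ)) * (1 - ν/(k:ℝ)) ^ (1 - ν/(k:ℝ))) ^ (2*(k:ℝ) - 1)) *
      (⨆ t ∈ Ioi (0:ℝ), ENNReal.ofReal (t ^ (-(2*ν/(k:ℝ)))) *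
        ∫⁻ l, ENNReal.ofReal (t ^ 2 / (t ^ 2 + l ^ (2*(k:ℝ)))) ∂μ)
      ≤ (⨆ α ∈ Ioi (0:ℝ), ENNReal.ofReal (α ^ (-(2*ν)) * ‖xdag - xαk α‖ ^ 2)) ∧
    (⨆ α ∈ Ioi (0:ℝ), ENNReal.ofReal (α ^ (-(2*ν)) * ‖xdag - xαk α‖ ^ 2))
      ≤ ⨆ t ∈ Ioi (0:ℝ), ENNReal.ofReal (t ^ (-(2*ν/(k:ℝ)))) *
          ∫⁻ l, ENNReal.ofReal (t ^ 2 / (t ^ 2 + l ^ (2*(k:ℝ)))) ∂μ :=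
  stmt16_general xdag k hk xαk μ hsupp hrep ν h0 h1
end

section
/- For every real s > 0 and a > 0, the quantity I(s,a) := ((s+a)/a)^a · ∫_0^1 s(1-t)^{s-1} t^a dt = ((s+a)/a)^a · Γ(s+1)Γ(a+1)/Γ(s+a+1) is uniformly bounded: sup_{s>0} sup_{a>0} I(s,a) is finite. Moreover lim_{s→∞} I(s,a) = a^{-a} Γ(a+1) for each fixed a > 0. -/
/-!
Write `I(s,a) = a^(-a) Γ(a+1) · (s+a)^a Γ(s+1)/Γ(s+a+1)`. Log-convexity of `Γ` squeezes the last
factor between `((s+a)/(s+a+1))^a` and `((s+a)/s)^a`, which gives the limit as `s → ∞`.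

For the uniform bound, the workhorse is `x^y ≤ exp((x-1)y)`. If `s ≤ 1`, then `((s+a)/a)^a ≤ e^s`
and superadditivity of `log Γ(x+1)` bounds the Gamma quotient by `1`. If `a ≤ 1 < s`, the squeeze
gives `I ≤ e^(a²/s) a^(-a) Γ(a+1) ≤ e²`. If `s, a ≥ 1`, Stirling's formula, transferred from `n!`
to `Γ(x+1)` by log-convexity at the cost of a factor `e³`, bounds `I` by `e⁹` times
`(s/(s+a))^s √u ≤ e^(-u) √u ≤ 1`, where `u = sa/(s+a)`.
-/

open Real Filter
open scoped Nat Topology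

theorem integral_rpow_mul_one_sub_rpow {u v : ℝ} (hu : 0 < u) (hv : 0 < v) :
    ∫ t in (0:ℝ)..1, t ^ (u - 1) * (1 - t) ^ (v - 1) = Gamma u * Gamma v / Gamma (u + v) := by
  apply Complex.ofReal_injective
  have hbeta := Complex.betaIntegral_eq_Gamma_mul_div u v (by simpa using hu) (by simpa using hv)
  push_cast [← Complex.Gamma_ofReal, ← hbeta, ← intervalIntegral.integral_ofReal]
  refine intervalIntegral.integral_congr fun t ht => ?_
  rw [Set.uIcc_of_le zero_le_one] at ht
  rw [Complex.ofReal_cpow ht.1, Complex.ofReal_cpow (sub_nonneg.2 ht.2)]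
  push_cast
  rfl

theorem setIntegral_mul_one_sub_rpow_mul_rpow {s a : ℝ} (hs : 0 < s) (ha : -1 < a) :
    ∫ t in Set.Ioo (0:ℝ) 1, s * (1 - t) ^ (s - 1) * t ^ a
      = Gamma (s + 1) * Gamma (a + 1) / Gamma (s + a + 1) := by
  rw [← MeasureTheory.integral_Ioc_eq_integral_Ioo, ← intervalIntegral.integral_of_le zero_le_one]
  have := integral_rpow_mul_one_sub_rpow (by linarith : 0 < a + 1) hs
  simp only [add_sub_cancel_right] at this
  rw [intervalIntegral.integral_congr (g := fun t => s * (t ^ a * (1 - t) ^ (s - 1)))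
    (fun t _ => by ring), intervalIntegral.integral_const_mul, this, Gamma_add_one hs.ne',
    show a + 1 + s = s + a + 1 by ring]
  ring

theorem rpow_le_exp_sub_one_mul {x : ℝ} (hx : 0 < x) {y : ℝ} (hy : 0 ≤ y) :
    x ^ y ≤ exp ((x - 1) * y) := by
  rw [rpow_def_of_pos hx]
  exact exp_le_exp.2 (mul_le_mul_of_nonneg_right (log_le_sub_one_of_pos hx) hy)

theorem log_Gamma_add_one_sub_log_Gamma {x : ℝ} (hx : 0 < x) :
    log (Gamma (x + 1)) - log (Gamma x) = log x := by
  rw [Gamma_add_one hx.ne', log_mul hx.ne' (Gamma_pos_of_pos hx).ne']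
  ring

theorem slope_log_Gamma_le {x y z : ℝ} (hx : 0 < x) (hxy : x < y) (hyz : y < z) :
    (log (Gamma y) - log (Gamma x)) / (y - x) ≤ (log (Gamma z) - log (Gamma y)) / (z - y) :=
  convexOn_log_Gamma.slope_mono_adjacent hx (hx.trans (hxy.trans hyz)) hxy hyz

theorem Gamma_add_one_mul_rpow_le {x c : ℝ} (hx : 0 < x) (hc : 0 ≤ c) :
    Gamma (x + 1) * x ^ c ≤ Gamma (x + 1 + c) := by
  rcases hc.eq_or_lt with rfl | hc
  · simp
  have hslope := slope_log_Gamma_le hx (lt_add_one x) (lt_add_of_pos_right (x + 1) hc)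
  rw [log_Gamma_add_one_sub_log_Gamma hx, add_sub_cancel_left, add_sub_cancel_left, div_one,
    le_div_iff₀ hc] at hslope
  rw [← exp_log (Gamma_pos_of_pos (by positivity : 0 < x + 1 + c)), rpow_def_of_pos hx,
    ← exp_log (Gamma_pos_of_pos (by positivity : 0 < x + 1)), ← exp_add]
  exact exp_le_exp.2 (by linarith)

theorem Gamma_add_le_Gamma_mul_rpow {x c : ℝ} (hx : 0 < x) (hc : 0 ≤ c) :
    Gamma (x + c) ≤ Gamma x * (x + c) ^ c := by
  rcases hc.eq_or_lt with rfl | hc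
  · simp
  have hxc : 0 < x + c := by positivity
  have hslope := slope_log_Gamma_le hx (lt_add_of_pos_right x hc) (lt_add_one (x + c))
  rw [log_Gamma_add_one_sub_log_Gamma hxc, add_sub_cancel_left, add_sub_cancel_left, div_one,
    div_le_iff₀ hc] at hslope
  rw [← exp_log (Gamma_pos_of_pos hxc), rpow_def_of_pos hxc, ← exp_log (Gamma_pos_of_pos hx),
    ← exp_add]
  exact exp_le_exp.2 (by linarith)

theorem Gamma_add_one_mul_Gamma_add_one_le {s a : ℝ} (hs : 0 < s) (ha : 0 < a) :
    Gamma (s + 1) * Gamma (a + 1) ≤ Gamma (s + a + 1) := by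
  have hsa : 0 < s + a := by positivity
  have interpolate : ∀ {x y : ℝ}, 0 < x → 0 < y → x + y = s + a →
      Gamma (x + 1) ≤ Gamma (s + a + 1) ^ (x / (s + a)) := fun {x y} hx hy hxy => by
    have h := Gamma_mul_add_mul_le_rpow_Gamma_mul_rpow_Gamma one_pos (by positivity : 0 < s + a + 1)
      (div_pos hy hsa) (div_pos hx hsa) (by field_simp; linarith)
    rwa [Gamma_one, one_rpow, one_mul, show y / (s + a) * 1 + x / (s + a) * (s + a + 1) = x + 1 by
      field_simp; linarith] at h
  calc Gamma (s + 1) * Gamma (a + 1)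
      ≤ Gamma (s + a + 1) ^ (s / (s + a)) * Gamma (s + a + 1) ^ (a / (s + a)) :=
        mul_le_mul (interpolate hs ha rfl) (interpolate ha hs (add_comm a s))
          (Gamma_pos_of_pos (by positivity)).le (by positivity)
    _ = Gamma (s + a + 1) := by
        rw [← rpow_add (Gamma_pos_of_pos (by positivity)), ← add_div, div_self hsa.ne', rpow_one]

theorem Gamma_add_one_le_one {x : ℝ} (hx₀ : 0 ≤ x) (hx₁ : x ≤ 1) : Gamma (x + 1) ≤ 1 := by
  have h := convexOn_Gamma.le_max_of_mem_Icc (x := 1) (y := 2) (z := x + 1)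
    (by norm_num) (by norm_num) ⟨by linarith, by linarith⟩
  simpa [Gamma_two] using h

/-- `√(2π) · stirlingApprox x` is Stirling's approximation of `Γ(x + 1)`. -/
noncomputable def stirlingApprox (x : ℝ) : ℝ := x ^ (x + 1 / 2) * exp (-x)

theorem stirlingApprox_pos {x : ℝ} (hx : 0 < x) : 0 < stirlingApprox x := by
  unfold stirlingApprox; positivity

theorem factorial_eq_sqrt_two_mul_stirlingSeq_mul {n : ℕ} (hn : n ≠ 0) :
    (n ! : ℝ) = √2 * Stirling.stirlingSeq n * stirlingApprox n := by
  have hn' : (0 : ℝ) < n := by positivity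
  have hsqrt : √(2 * n : ℝ) * (n / exp 1) ^ n = √2 * stirlingApprox n := by
    rw [stirlingApprox, rpow_add hn', rpow_natCast, sqrt_mul zero_le_two, sqrt_eq_rpow, div_pow,
      ← exp_nat_mul, mul_one, exp_neg, sqrt_eq_rpow]
    ring
  rw [Stirling.stirlingSeq, mul_comm √2, mul_assoc, ← hsqrt, div_mul_cancel₀ _ (by positivity)]

theorem factorial_le_exp_one_mul_stirlingApprox {n : ℕ} (hn : n ≠ 0) :
    (n ! : ℝ) ≤ exp 1 * stirlingApprox n := by
  obtain ⟨m, rfl⟩ := Nat.exists_eq_succ_of_ne_zero hn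
  have hseq : Stirling.stirlingSeq (m + 1) ≤ exp 1 / √2 := by
    simpa using Stirling.stirlingSeq'_antitone (Nat.zero_le m)
  rw [factorial_eq_sqrt_two_mul_stirlingSeq_mul hn]
  have := stirlingApprox_pos (x := (m + 1 : ℕ)) (by positivity)
  calc √2 * Stirling.stirlingSeq (m + 1) * stirlingApprox (m + 1 : ℕ)
      ≤ √2 * (exp 1 / √2) * stirlingApprox (m + 1 : ℕ) := by gcongr
    _ = exp 1 * stirlingApprox (m + 1 : ℕ) := by field_simp

theorem stirlingApprox_le_factorial {n : ℕ} (hn : n ≠ 0) : stirlingApprox n ≤ n ! := by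
  have hseq := Stirling.sqrt_pi_le_stirlingSeq hn
  have hπ : 1 ≤ √2 * √π := by
    rw [← sqrt_mul zero_le_two]; exact one_le_sqrt.2 (by nlinarith [pi_gt_three])
  rw [factorial_eq_sqrt_two_mul_stirlingSeq_mul hn]
  have := stirlingApprox_pos (x := n) (by positivity)
  calc stirlingApprox n ≤ √2 * √π * stirlingApprox n := le_mul_of_one_le_left this.le hπ
    _ ≤ √2 * Stirling.stirlingSeq n * stirlingApprox n := by gcongr

theorem Gamma_add_one_le_exp_three_mul_stirlingApprox {x : ℝ} (hx : 1 ≤ x) :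
    Gamma (x + 1) ≤ exp 3 * stirlingApprox x := by
  set n := ⌊x⌋₊
  set d := x - n with hd
  have hn : n ≠ 0 := (Nat.floor_pos.2 hx).ne'
  have hnx : (n : ℝ) ≤ x := Nat.floor_le (by linarith)
  have hd₀ : 0 ≤ d := sub_nonneg.2 hnx
  have hd₁ : d ≤ 1 := by linarith [Nat.lt_floor_add_one x]
  have hx₀ : 0 < x := by linarith
  have hΓ : Gamma (x + 1) ≤ n ! * (x + 1) ^ d := by
    have h := Gamma_add_le_Gamma_mul_rpow (x := n + 1) (by positivity) hd₀
    rwa [Gamma_nat_eq_factorial, show (n : ℝ) + 1 + d = x + 1 by ring] at h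
  have hshift : (x + 1) ^ d ≤ exp d * x ^ d := by
    rw [← exp_one_rpow, ← mul_rpow (exp_pos 1).le hx₀.le]
    exact rpow_le_rpow (by linarith) (by nlinarith [add_one_le_exp 1]) hd₀
  calc Gamma (x + 1)
      ≤ (exp 1 * ((n : ℝ) ^ ((n : ℝ) + 1 / 2) * exp (-n))) * (exp d * x ^ d) :=
        hΓ.trans (mul_le_mul (factorial_le_exp_one_mul_stirlingApprox hn) hshift
          (by positivity) (by positivity))
    _ ≤ (exp 1 * (x ^ ((n : ℝ) + 1 / 2) * exp (-n))) * (exp d * x ^ d) := by gcongr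
    _ = exp (1 + 2 * d) * stirlingApprox x := by
        have hpow : x ^ (x + 1 / 2) = x ^ ((n : ℝ) + 1 / 2) * x ^ d := by
          rw [← rpow_add hx₀, hd]; ring_nf
        rw [stirlingApprox, hpow, show -(n : ℝ) = -x + d by ring, exp_add, exp_add, two_mul,
          exp_add]
        ring
    _ ≤ exp 3 * stirlingApprox x := by
        gcongr
        · exact (stirlingApprox_pos hx₀).le
        · linarith

theorem stirlingApprox_le_exp_three_mul_Gamma_add_one {x : ℝ} (hx : 1 ≤ x) :
    stirlingApprox x ≤ exp 3 * Gamma (x + 1) := by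
  set n := ⌊x⌋₊
  set d := x - n with hd
  have hn : n ≠ 0 := (Nat.floor_pos.2 hx).ne'
  have hn₁ : (1 : ℝ) ≤ n := by exact_mod_cast Nat.one_le_iff_ne_zero.2 hn
  have hnx : (n : ℝ) ≤ x := Nat.floor_le (by linarith)
  have hxn : x < n + 1 := Nat.lt_floor_add_one x
  have hd₀ : 0 ≤ d := sub_nonneg.2 hnx
  have hn₀ : (0 : ℝ) < n := by linarith
  have hΓ : n ! * (n : ℝ) ^ d ≤ Gamma (x + 1) := by
    have h := Gamma_add_one_mul_rpow_le hn₀ hd₀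
    rwa [Gamma_nat_eq_factorial, show (n : ℝ) + 1 + d = x + 1 by ring] at h
  have hratio : (x / n) ^ (x + 1 / 2) ≤ exp 3 := by
    refine (rpow_le_exp_sub_one_mul (by positivity) (by linarith)).trans (exp_le_exp.2 ?_)
    rw [div_sub_one hn₀.ne', div_mul_eq_mul_div, div_le_iff₀ hn₀]
    nlinarith
  calc stirlingApprox x
      ≤ x ^ (x + 1 / 2) * exp (-n) := by unfold stirlingApprox; gcongr
    _ = (x / n) ^ (x + 1 / 2) * (stirlingApprox n * (n : ℝ) ^ d) := by
        have hpow : (n : ℝ) ^ ((n : ℝ) + 1 / 2) * (n : ℝ) ^ d = (n : ℝ) ^ (x + 1 / 2) := by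
          rw [← rpow_add hn₀, hd]; ring_nf
        rw [stirlingApprox, mul_right_comm _ (exp _), hpow, ← mul_assoc,
          ← mul_rpow (by positivity) hn₀.le, div_mul_cancel₀ _ hn₀.ne']
    _ ≤ exp 3 * (n ! * (n : ℝ) ^ d) := by
        gcongr
        · exact (mul_pos (stirlingApprox_pos hn₀) (by positivity)).le
        · exact stirlingApprox_le_factorial hn
    _ ≤ exp 3 * Gamma (x + 1) := by gcongr

theorem rpow_mul_stirlingApprox_div_le_one {s a : ℝ} (hs : 0 < s) (ha : 0 < a) :
    ((s + a) / a) ^ a * (stirlingApprox s * stirlingApprox a / stirlingApprox (s + a)) ≤ 1 := by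
  have hsa : 0 < s + a := by positivity
  set u := s * a / (s + a) with hu_def
  have hu : 0 < u := by positivity
  have hsplit : ((s + a) / a) ^ a * (stirlingApprox s * stirlingApprox a / stirlingApprox (s + a))
      = (s / (s + a)) ^ s * u ^ (1 / 2 : ℝ) := by
    simp only [stirlingApprox]
    rw [div_rpow hsa.le ha.le, div_rpow hs.le hsa.le, div_rpow (by positivity) hsa.le,
      mul_rpow hs.le ha.le, rpow_add hs, rpow_add ha, rpow_add hsa, rpow_add hsa,
      show -(s + a) = -s + -a by ring, exp_add]
    field_simp
  have hfirst : (s / (s + a)) ^ s ≤ exp (-u) := by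
    refine (rpow_le_exp_sub_one_mul (by positivity) hs.le).trans_eq (congrArg exp ?_)
    rw [hu_def]
    field_simp
    ring
  calc ((s + a) / a) ^ a * (stirlingApprox s * stirlingApprox a / stirlingApprox (s + a))
      ≤ exp (-u) * exp ((u - 1) * (1 / 2)) := by
        rw [hsplit]
        exact mul_le_mul hfirst (rpow_le_exp_sub_one_mul hu (by norm_num)) (by positivity)
          (by positivity)
    _ ≤ 1 := by
        rw [← exp_add, exp_le_one_iff]
        linarith

theorem rpow_mul_Gamma_div_Gamma_le {s a : ℝ} (hs : 0 < s) (ha : 0 ≤ a) :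
    (s + a) ^ a * (Gamma (s + 1) / Gamma (s + a + 1)) ≤ ((s + a) / s) ^ a := by
  have hΓ := Gamma_add_one_mul_rpow_le hs ha
  rw [add_right_comm] at hΓ
  rw [div_rpow (by positivity) hs.le, mul_div_assoc', div_le_div_iff₀
    (Gamma_pos_of_pos (by positivity)) (by positivity), mul_assoc]
  exact mul_le_mul_of_nonneg_left hΓ (by positivity)

theorem rpow_div_le_rpow_mul_Gamma_div_Gamma {s a : ℝ} (hs : 0 < s) (ha : 0 ≤ a) :
    ((s + a) / (s + a + 1)) ^ a ≤ (s + a) ^ a * (Gamma (s + 1) / Gamma (s + a + 1)) := by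
  have hΓ := Gamma_add_le_Gamma_mul_rpow (x := s + 1) (by positivity) ha
  rw [add_right_comm] at hΓ
  rw [div_rpow (by positivity) (by positivity), mul_div_assoc', div_le_div_iff₀
    (by positivity) (Gamma_pos_of_pos (by positivity)), mul_assoc]
  exact mul_le_mul_of_nonneg_left hΓ (by positivity)

theorem tendsto_rpow_add_div_add_atTop (a b c : ℝ) :
    Tendsto (fun s : ℝ => ((s + b) / (s + c)) ^ a) atTop (𝓝 1) := by
  have hbase : Tendsto (fun s : ℝ => (s + b) / (s + c)) atTop (𝓝 1) := by
    have h : Tendsto (fun s : ℝ => 1 + (b - c) / (s + c)) atTop (𝓝 (1 + 0)) :=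
      tendsto_const_nhds.add
        (tendsto_const_nhds.div_atTop (tendsto_atTop_add_const_right _ c tendsto_id))
    rw [add_zero] at h
    refine h.congr' ?_
    filter_upwards [eventually_gt_atTop (-c)] with s hs
    have : s + c ≠ 0 := by linarith
    field_simp
    ring
  simpa [Function.comp_def] using
    (continuousAt_rpow_const 1 a (Or.inl one_ne_zero)).tendsto.comp hbase

theorem tendsto_rpow_mul_Gamma_div_Gamma {a : ℝ} (ha : 0 ≤ a) :
    Tendsto (fun s : ℝ => (s + a) ^ a * (Gamma (s + 1) / Gamma (s + a + 1))) atTop (𝓝 1) := by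
  have hupper := tendsto_rpow_add_div_add_atTop a a 0
  simp only [add_zero] at hupper
  refine tendsto_of_tendsto_of_tendsto_of_le_of_le' (tendsto_rpow_add_div_add_atTop a a (a + 1))
    hupper ?_ ?_
  · filter_upwards [eventually_gt_atTop 0] with s hs
    rw [← add_assoc]
    exact rpow_div_le_rpow_mul_Gamma_div_Gamma hs ha
  · filter_upwards [eventually_gt_atTop 0] with s hs
    exact rpow_mul_Gamma_div_Gamma_le hs ha

/-- The quantity `I(s,a)`, with the Beta integral evaluated. -/
noncomputable def scaledBetaMoment (s a : ℝ) : ℝ :=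
  ((s + a) / a) ^ a * (Gamma (s + 1) * Gamma (a + 1) / Gamma (s + a + 1))

theorem scaledBetaMoment_eq {s a : ℝ} (hs : 0 ≤ s) (ha : 0 < a) :
    scaledBetaMoment s a
      = a ^ (-a) * Gamma (a + 1) * ((s + a) ^ a * (Gamma (s + 1) / Gamma (s + a + 1))) := by
  rw [scaledBetaMoment, div_rpow (by positivity) ha.le, rpow_neg ha.le]
  ring

theorem rpow_neg_self_mul_Gamma_add_one_le {a : ℝ} (ha₀ : 0 < a) (ha₁ : a ≤ 1) :
    a ^ (-a) * Gamma (a + 1) ≤ exp 1 := by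
  have hpow : a ^ (-a) ≤ exp 1 := by
    rw [rpow_neg ha₀.le, ← inv_rpow ha₀.le]
    refine (rpow_le_exp_sub_one_mul (inv_pos.2 ha₀) ha₀.le).trans (exp_le_exp.2 ?_)
    rw [sub_mul, inv_mul_cancel₀ ha₀.ne']
    linarith
  calc a ^ (-a) * Gamma (a + 1) ≤ exp 1 * 1 :=
        mul_le_mul hpow (Gamma_add_one_le_one ha₀.le ha₁) (Gamma_pos_of_pos (by linarith)).le
          (exp_pos 1).le
    _ = exp 1 := mul_one _

theorem scaledBetaMoment_le_of_le_one {s a : ℝ} (hs₀ : 0 < s) (hs₁ : s ≤ 1) (ha : 0 < a) :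
    scaledBetaMoment s a ≤ exp 1 := by
  have hpow : ((s + a) / a) ^ a ≤ exp s := by
    refine (rpow_le_exp_sub_one_mul (by positivity) ha.le).trans_eq (congrArg exp ?_)
    field_simp
    ring
  have hratio : Gamma (s + 1) * Gamma (a + 1) / Gamma (s + a + 1) ≤ 1 :=
    (div_le_one (Gamma_pos_of_pos (by positivity))).2 (Gamma_add_one_mul_Gamma_add_one_le hs₀ ha)
  calc scaledBetaMoment s a ≤ exp s * 1 :=
        mul_le_mul hpow hratio (by positivity) (exp_pos s).le
    _ ≤ exp 1 := by rw [mul_one]; exact exp_le_exp.2 hs₁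

theorem scaledBetaMoment_le_of_le_one_le {s a : ℝ} (hs : 1 ≤ s) (ha₀ : 0 < a) (ha₁ : a ≤ 1) :
    scaledBetaMoment s a ≤ exp 2 := by
  have hs₀ : 0 < s := by linarith
  have hpow : ((s + a) / s) ^ a ≤ exp 1 := by
    refine (rpow_le_exp_sub_one_mul (by positivity) ha₀.le).trans (exp_le_exp.2 ?_)
    rw [div_sub_one hs₀.ne', add_sub_cancel_left, div_mul_eq_mul_div, div_le_one hs₀]
    nlinarith
  rw [scaledBetaMoment_eq hs₀.le ha₀, show (2 : ℝ) = 1 + 1 by norm_num, exp_add]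
  exact mul_le_mul (rpow_neg_self_mul_Gamma_add_one_le ha₀ ha₁)
    ((rpow_mul_Gamma_div_Gamma_le hs₀ ha₀.le).trans hpow) (by positivity) (exp_pos 1).le

theorem scaledBetaMoment_le_of_one_le {s a : ℝ} (hs : 1 ≤ s) (ha : 1 ≤ a) :
    scaledBetaMoment s a ≤ exp 9 := by
  have hs₀ : 0 < s := by linarith
  have ha₀ : 0 < a := by linarith
  have hφs := stirlingApprox_pos hs₀
  have hφa := stirlingApprox_pos ha₀
  have hφsa := stirlingApprox_pos (add_pos hs₀ ha₀)
  have hlow : stirlingApprox (s + a) / exp 3 ≤ Gamma (s + a + 1) := by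
    rw [div_le_iff₀ (exp_pos 3), mul_comm]
    exact stirlingApprox_le_exp_three_mul_Gamma_add_one (by linarith)
  have hGamma : Gamma (s + 1) * Gamma (a + 1) / Gamma (s + a + 1)
      ≤ exp 9 * (stirlingApprox s * stirlingApprox a / stirlingApprox (s + a)) :=
    calc Gamma (s + 1) * Gamma (a + 1) / Gamma (s + a + 1)
        ≤ (exp 3 * stirlingApprox s) * (exp 3 * stirlingApprox a)
            / (stirlingApprox (s + a) / exp 3) :=
          div_le_div₀ (by positivity)
            (mul_le_mul (Gamma_add_one_le_exp_three_mul_stirlingApprox hs)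
              (Gamma_add_one_le_exp_three_mul_stirlingApprox ha)
              (Gamma_pos_of_pos (by positivity)).le (by positivity))
            (by positivity) hlow
      _ = exp 9 * (stirlingApprox s * stirlingApprox a / stirlingApprox (s + a)) := by
          rw [show (9 : ℝ) = 3 + 3 + 3 by norm_num, exp_add, exp_add]
          field_simp
  calc scaledBetaMoment s a
      ≤ ((s + a) / a) ^ a
          * (exp 9 * (stirlingApprox s * stirlingApprox a / stirlingApprox (s + a))) :=
        mul_le_mul_of_nonneg_left hGamma (by positivity)
    _ = exp 9 * (((s + a) / a) ^ a
          * (stirlingApprox s * stirlingApprox a / stirlingApprox (s + a))) := by ring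
    _ ≤ exp 9 := mul_le_of_le_one_right (exp_pos 9).le (rpow_mul_stirlingApprox_div_le_one hs₀ ha₀)

theorem scaledBetaMoment_le {s a : ℝ} (hs : 0 < s) (ha : 0 < a) :
    scaledBetaMoment s a ≤ exp 9 := by
  rcases le_total s 1 with hs₁ | hs₁
  · exact (scaledBetaMoment_le_of_le_one hs hs₁ ha).trans (exp_le_exp.2 (by norm_num))
  rcases le_total a 1 with ha₁ | ha₁
  · exact (scaledBetaMoment_le_of_le_one_le hs₁ ha ha₁).trans (exp_le_exp.2 (by norm_num))
  · exact scaledBetaMoment_le_of_one_le hs₁ ha₁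

theorem tendsto_scaledBetaMoment {a : ℝ} (ha : 0 < a) :
    Tendsto (fun s => scaledBetaMoment s a) atTop (𝓝 (a ^ (-a) * Gamma (a + 1))) := by
  have h := (tendsto_rpow_mul_Gamma_div_Gamma ha.le).const_mul (a ^ (-a) * Gamma (a + 1))
  rw [mul_one] at h
  refine h.congr' ?_
  filter_upwards [eventually_ge_atTop 0] with s hs
  rw [scaledBetaMoment_eq hs ha]

/-- The quantity `I(s,a) = ((s+a)/a)^a ∫₀¹ s (1-t)^(s-1) t^a dt
= ((s+a)/a)^a Γ(s+1)Γ(a+1)/Γ(s+a+1)` is uniformly bounded over `s, a > 0`,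
and for each fixed `a > 0`, `I(s,a) → a^(-a) Γ(a+1)` as `s → ∞`. -/
theorem stmt18 :
    (∀ s : ℝ, 0 < s → ∀ a : ℝ, 0 < a →
      ((s+a)/a) ^ a * ∫ t in Set.Ioo (0:ℝ) 1, s * (1-t) ^ (s-1) * t ^ a
        = ((s+a)/a) ^ a * (Real.Gamma (s+1) * Real.Gamma (a+1) / Real.Gamma (s+a+1))) ∧
    (∃ C : ℝ, ∀ s : ℝ, 0 < s → ∀ a : ℝ, 0 < a →
      ((s+a)/a) ^ a * (Real.Gamma (s+1) * Real.Gamma (a+1) / Real.Gamma (s+a+1)) ≤ C) ∧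
    (∀ a : ℝ, 0 < a →
      Tendsto (fun s : ℝ =>
          ((s+a)/a) ^ a * (Real.Gamma (s+1) * Real.Gamma (a+1) / Real.Gamma (s+a+1)))
        atTop (nhds (a ^ (-a) * Real.Gamma (a+1)))) := by
  refine ⟨fun s hs a ha => ?_, ⟨exp 9, fun s hs a ha => scaledBetaMoment_le hs ha⟩,
    fun a ha => tendsto_scaledBetaMoment ha⟩
  rw [setIntegral_mul_one_sub_rpow_mul_rpow hs (by linarith)]
end

section
/- Let x† = (n^{-3/2})_{n≥1} ∈ ℓ²(ℕ) and T = diag((n^{-1/2})_{n≥1}), so T*T has eigenvalues λ_n = n^{-1}. Then sup_{N≥1} N² Σ_{n≥N} n^{-3} is finite and equals ζ(3) (attained at N = 1), while Σ_{n≥1} n^{-1} = ∞; hence |||x†|||₁ < ∞ but x† is not in the range of T*T with ‖(T*T)^{-1}x†‖ finite, i.e., x† ∈ 𝕏₁ \ X₁. -/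
/-!
Grouping the indices `n ≥ N` into blocks `{mN, …, mN + N - 1}` (`m ≥ 1`) and bounding each term
of a block by `(mN)⁻³` gives `Σ_{n ≥ N} n⁻³ ≤ N · Σ_{m ≥ 1} (mN)⁻³ = N⁻² ζ(3)`, so
`N² Σ_{n ≥ N} n⁻³ ≤ ζ(3)`, with equality at `N = 1`.
-/

theorem hasSum_comp_nat_div_of_nonneg {c : ℕ → ℝ} {s : ℝ} (hc : 0 ≤ c) (hs : HasSum c s)
    (N : ℕ) [NeZero N] : HasSum (fun n ↦ c (n / N)) (N * s) := by
  let e := Nat.divModEquiv N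
  have hfib : (fun n ↦ c (n / N)) ∘ e.symm = fun p : ℕ × Fin N ↦ c p.1 * 1 := by
    ext p
    change c (e (e.symm p)).1 = c p.1 * 1
    rw [e.apply_symm_apply, mul_one]
  have hnorm : Summable fun n ↦ ‖c n‖ := by
    simpa only [Real.norm_of_nonneg (hc _)] using hs.summable
  have hone := hasSum_fintype fun _ : Fin N ↦ (1 : ℝ)
  have hprod := hs.mul hone
    (summable_mul_of_summable_norm (g := fun _ : Fin N ↦ (1 : ℝ)) hnorm Summable.of_finite)
  rw [← e.symm.hasSum_iff, hfib, mul_comm]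
  simpa using hprod

theorem pow_mul_tsum_tail_inv_pow_le {k N : ℕ} (hk : 1 ≤ k) (hN : N ≠ 0) :
    (N : ℝ) ^ k * ∑' n : ℕ, (if N ≤ n then ((n : ℝ) ^ (k + 1))⁻¹ else 0)
      ≤ ∑' n : ℕ, ((n : ℝ) ^ (k + 1))⁻¹ := by
  have : NeZero N := ⟨hN⟩
  have hζ : Summable fun n : ℕ ↦ ((n : ℝ) ^ (k + 1))⁻¹ :=
    Real.summable_nat_pow_inv.mpr (by omega)
  have hblock := hasSum_comp_nat_div_of_nonneg (fun n ↦ by positivity)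
    (hζ.hasSum.mul_left ((N : ℝ) ^ (k + 1))⁻¹) N
  have hterm : ∀ n : ℕ, (if N ≤ n then ((n : ℝ) ^ (k + 1))⁻¹ else 0)
      ≤ ((N : ℝ) ^ (k + 1))⁻¹ * (((n / N : ℕ) : ℝ) ^ (k + 1))⁻¹ := by
    intro n
    split_ifs with h
    · have : 0 < n / N := Nat.div_pos h (Nat.pos_of_ne_zero hN)
      rw [← mul_inv, ← mul_pow]
      gcongr
      exact_mod_cast Nat.mul_div_le n N
    · positivity
  have htail : Summable fun n : ℕ ↦ if N ≤ n then ((n : ℝ) ^ (k + 1))⁻¹ else 0 :=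
    hζ.of_nonneg_of_le (fun n ↦ by split_ifs <;> positivity) (fun n ↦ by split_ifs <;> simp)
  calc (N : ℝ) ^ k * ∑' n : ℕ, (if N ≤ n then ((n : ℝ) ^ (k + 1))⁻¹ else 0)
      ≤ (N : ℝ) ^ k * (N * (((N : ℝ) ^ (k + 1))⁻¹ * ∑' n : ℕ, ((n : ℝ) ^ (k + 1))⁻¹)) := by
        gcongr
        exact hasSum_le hterm htail.hasSum hblock
    _ = ∑' n : ℕ, ((n : ℝ) ^ (k + 1))⁻¹ := by
        rw [← mul_assoc, ← pow_succ, ← mul_assoc, mul_inv_cancel₀ (by positivity), one_mul]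

/-- Example: for `x† = (n^(-3/2))_{n≥1} ∈ ℓ²` and `T = diag(n^(-1/2))`, so that
`T*T` has eigenvalues `1/n`, the quantity `|||x†|||₁² = sup_{N≥1} N² Σ_{n≥N} n⁻³`
is finite, attained at `N = 1`, where it equals `ζ(3) = Σ_{n≥1} n⁻³`; while
`‖x†‖₁² = Σ_{n≥1} n⁻¹ = ∞`.  Hence `x† ∈ 𝕏₁ \ X₁`. -/
theorem stmt19 :
    IsGreatest
      {y : ℝ | ∃ N : ℕ, 1 ≤ N ∧
        y = (N:ℝ) ^ 2 * ∑' n : ℕ, (if N ≤ n then (((n:ℝ) ^ 3)⁻¹) else 0)}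
      (∑' n : ℕ, (((n:ℝ) + 1) ^ 3)⁻¹) ∧
    ¬ Summable (fun n : ℕ => ((n:ℝ) + 1)⁻¹) := by
  have hζ : ∑' n : ℕ, ((n : ℝ) ^ 3)⁻¹ = ∑' n : ℕ, (((n : ℝ) + 1) ^ 3)⁻¹ := by
    rw [(Real.summable_nat_pow_inv.mpr (by norm_num)).tsum_eq_zero_add]
    simp
  -- the `n = 0` terms agree because `(0 ^ 3)⁻¹ = 0` in Lean
  have htail_one :
      ∑' n : ℕ, (if 1 ≤ n then ((n : ℝ) ^ 3)⁻¹ else 0) = ∑' n : ℕ, ((n : ℝ) ^ 3)⁻¹ :=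
    tsum_congr fun n ↦ by rcases n with _ | n <;> simp
  refine ⟨⟨⟨1, le_rfl, by simp [htail_one, hζ]⟩, ?_⟩, ?_⟩
  · rintro y ⟨N, hN, rfl⟩
    rw [← hζ]
    exact pow_mul_tsum_tail_inv_pow_le (k := 2) one_le_two (by omega)
  · simpa using (summable_nat_add_iff 1).not.mpr Real.not_summable_natCast_inv
end
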